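/- arXiv:1704.06799 — 7 statements merged into one kernel-verified Lean document; each statement's English description precedes it below -/
import Mathlib

section
/- Let q₁,...,q_m ∈ ℝ^D be m linearly independent vectors and let r = 2s + n be a positive integer with r ≤ 2(D−m)+1. Then the tensor monomials of rank r formed as tensor products of s Kronecker delta tensors and n vectors from {q₁,...,q_m} (in all inequivalent index arrangements) are linearly independent: if a linear combination of them vanishes, then all coefficients vanish. -/
/-- A monomial datum on rank `r` with `m` vector labels: each index slot is either
assigned a vector label (`Sum.inl k`) or paired with another, different, slot
(`Sum.inr j`), the pairing being symmetric.  A pair of slots `{i,j}` corresponds to a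
Kronecker delta factor `δ_{μᵢμⱼ}` and a slot labelled `k` to a factor `q_k`. -/
def IsMonomialDatum {r m : ℕ} (P : Fin r → Fin m ⊕ Fin r) : Prop :=
  ∀ i j, P i = Sum.inr j → j ≠ i ∧ P j = Sum.inr i

/-- The rank-`r` tensor monomial on `ℝ^D` associated to a monomial datum:
the tensor product of the Kronecker deltas of the paired slots and of the
vectors `q k` of the labelled slots. -/
def monomialTensor {D r m : ℕ} (q : Fin m → (Fin D → ℝ))
    (P : Fin r → Fin m ⊕ Fin r) : (Fin r → Fin D) → ℝ :=
  fun μ => ∏ i, (match P i with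
    | Sum.inl k => q k (μ i)
    | Sum.inr j => if μ i = μ j then (1 : ℝ) else 0)

/-!
Pair a monomial with a pure tensor `u₁ ⊗ ⋯ ⊗ u_r`: contracting the Kronecker deltas one at a
time, the pairing becomes a product of one dot product `u_i ⬝ᵥ u_j` per delta pair `{i, j}` and
one dot product `u_i ⬝ᵥ q_k` per slot labelled `k`.

Given a vanishing combination, pick a monomial `P₀` in it with the fewest vector slots. Put the
dual vector `p_k` (`p_k ⬝ᵥ q_l = δ_kl`) on each slot of `P₀` labelled `k`, and on both slots of
each delta pair of `P₀` one unit vector orthogonal to all `q_l`, different pairs getting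
orthogonal vectors; this is possible because `P₀` has at most `r / 2 ≤ D - m` pairs. The
resulting pure tensor pairs to `1` with `P₀`, while a monomial `P` with at least as many vector
slots pairs to a nonzero number only if its labelled slots, hence also its pairs, are those of
`P₀`. So the coefficient of `P₀` vanishes.
-/

open Finset Matrix

section Contraction

variable {ι κ R : Type*} [DecidableEq ι] [DecidableEq κ] [CommSemiring R]

lemma prod_univ_eq_mul_mul_prod_erase_erase [Fintype ι] {M : Type*} [CommMonoid M]
    (f : ι → M) {i j : ι} (hij : i ≠ j) :
    ∏ k, f k = f i * f j * ∏ k ∈ (univ.erase i).erase j, f k := by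
  rw [mul_assoc, mul_prod_erase _ _ (mem_erase.2 ⟨hij.symm, mem_univ j⟩),
    mul_prod_erase _ _ (mem_univ i)]

/-- The contribution of the orbit of `i` under an involution `σ`, booked on its least element. -/
def pairFactor [Fintype κ] [LinearOrder ι] (σ : ι → ι) (b : ι → κ → R) (i : ι) : R :=
  if σ i < i then 1 else ∑ a, b i a * if σ i = i then 1 else b (σ i) a

def fixPair (σ : ι → ι) (i j : ι) : ι → ι :=
  Function.update (Function.update σ i i) j j

def mulIndicatorPair (b : ι → κ → R) (i j : ι) (c : κ) : ι → κ → R :=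
  Function.update (Function.update b i fun a => b i a * if a = c then 1 else 0) j
    fun a => b j a * if a = c then 1 else 0

section FixPair

variable {σ : ι → ι} {i j k : ι}

lemma fixPair_apply_left (hij : i ≠ j) : fixPair σ i j i = i := by
  simp [fixPair, Function.update_of_ne hij]

lemma fixPair_apply_right : fixPair σ i j j = j := by
  simp [fixPair]

lemma fixPair_apply_of_ne (hki : k ≠ i) (hkj : k ≠ j) : fixPair σ i j k = σ k := by
  simp [fixPair, Function.update_of_ne hki, Function.update_of_ne hkj]

lemma mulIndicatorPair_apply_of_ne (b : ι → κ → R) (c : κ) (hki : k ≠ i) (hkj : k ≠ j) :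
    mulIndicatorPair b i j c k = b k := by
  simp [mulIndicatorPair, Function.update_of_ne hki, Function.update_of_ne hkj]

lemma card_fixPair_lt [Fintype ι] (hj : σ i = j) (hij : i ≠ j) :
    #{k | fixPair σ i j k ≠ k} < #{k | σ k ≠ k} := by
  refine card_lt_card ⟨fun k hk => ?_, fun h => ?_⟩
  · simp only [mem_filter, mem_univ, true_and] at hk ⊢
    by_cases hki : k = i
    · subst hki; exact absurd (fixPair_apply_left hij) hk
    by_cases hkj : k = j
    · subst hkj; exact absurd fixPair_apply_right hk
    rwa [← fixPair_apply_of_ne (σ := σ) hki hkj]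
  · have := h (by simpa [hj] using hij.symm : i ∈ ({k | σ k ≠ k} : Finset ι))
    simp [fixPair_apply_left hij] at this

variable (hσ : Function.Involutive σ) (hj : σ i = j)
include hσ hj

omit [DecidableEq ι] in
lemma Function.Involutive.apply_ne_of_ne (hki : k ≠ i) (hkj : k ≠ j) : σ k ≠ i ∧ σ k ≠ j :=
  ⟨fun h => hkj (by rw [← hσ k, h, hj]), fun h => hki (by rw [← hσ k, h, ← hj, hσ])⟩

lemma Function.Involutive.fixPair (hij : i ≠ j) : Function.Involutive (fixPair σ i j) := by
  intro k
  by_cases hki : k = i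
  · rw [hki, fixPair_apply_left hij, fixPair_apply_left hij]
  by_cases hkj : k = j
  · rw [hkj, fixPair_apply_right, fixPair_apply_right]
  obtain ⟨hσki, hσkj⟩ := hσ.apply_ne_of_ne hj hki hkj
  rw [fixPair_apply_of_ne hki hkj, fixPair_apply_of_ne hσki hσkj, hσ k]

/-- Contracting the pair `{i, j}`, using `δ(x, y) = ∑ c, δ(x, c) δ(y, c)`. -/
lemma prod_mul_delta_eq_sum_fixPair [Fintype ι] [Fintype κ] (hij : i ≠ j) (b : ι → κ → R)
    (μ : ι → κ) :
    ∏ k, b k (μ k) * (if μ k = μ (σ k) then 1 else 0) =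
      ∑ c, ∏ k, mulIndicatorPair b i j c k (μ k) *
        (if μ k = μ (fixPair σ i j k) then 1 else 0) := by
  have hji : σ j = i := hj ▸ hσ i
  have hrest : ∀ c, ∏ k ∈ (univ.erase i).erase j,
      mulIndicatorPair b i j c k (μ k) * (if μ k = μ (fixPair σ i j k) then 1 else 0) =
        ∏ k ∈ (univ.erase i).erase j, b k (μ k) * (if μ k = μ (σ k) then 1 else 0) :=
    fun c => prod_congr rfl fun k hk => by
      obtain ⟨hkj, hki⟩ := by simpa using hk
      rw [mulIndicatorPair_apply_of_ne b c hki hkj, fixPair_apply_of_ne hki hkj]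
  simp only [prod_univ_eq_mul_mul_prod_erase_erase _ hij, hrest, ← sum_mul,
    fixPair_apply_left hij, fixPair_apply_right, hj, hji]
  congr 1
  by_cases h : μ i = μ j
  · simp [mulIndicatorPair, Function.update_of_ne hij, h]
  · simp [mulIndicatorPair, Function.update_of_ne hij, h, Ne.symm h]

lemma prod_pairFactor_fixPair [Fintype ι] [Fintype κ] [LinearOrder ι] (hij : i ≠ j)
    (b : ι → κ → R) (c : κ) :
    ∏ k, pairFactor (fixPair σ i j) (mulIndicatorPair b i j c) k =
      b i c * b j c * ∏ k ∈ (univ.erase i).erase j, pairFactor σ b k := by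
  rw [prod_univ_eq_mul_mul_prod_erase_erase _ hij]
  congr 1
  · simp [pairFactor, mulIndicatorPair, fixPair_apply_left hij, fixPair_apply_right,
      Function.update_of_ne hij]
  · refine prod_congr rfl fun k hk => ?_
    obtain ⟨hkj, hki⟩ := by simpa using hk
    obtain ⟨hσki, hσkj⟩ := hσ.apply_ne_of_ne hj hki hkj
    simp only [pairFactor, fixPair_apply_of_ne hki hkj, mulIndicatorPair_apply_of_ne b c hki hkj,
      mulIndicatorPair_apply_of_ne b c hσki hσkj]

end FixPair

variable [Fintype ι] [LinearOrder ι] [Fintype κ]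

theorem sum_prod_mul_delta {σ : ι → ι} (hσ : Function.Involutive σ) (b : ι → κ → R) :
    ∑ μ : ι → κ, ∏ i, b i (μ i) * (if μ i = μ (σ i) then 1 else 0) = ∏ i, pairFactor σ b i := by
  induction hn : #{i | σ i ≠ i} using Nat.strong_induction_on generalizing σ b with
  | _ n ih =>
  by_cases hfix : ∀ i, σ i = i
  · simp [pairFactor, hfix, Fintype.prod_sum]
  obtain ⟨i, hi⟩ : ∃ i, i < σ i := by
    obtain ⟨i, hi⟩ := not_forall.1 hfix
    rcases lt_or_gt_of_ne hi with h | h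
    · exact ⟨σ i, by rwa [hσ i]⟩
    · exact ⟨i, h⟩
  obtain ⟨j, hj⟩ : ∃ j, σ i = j := ⟨_, rfl⟩
  rw [hj] at hi
  have hji : σ j = i := hj ▸ hσ i
  have ih' := ih _ (hn ▸ card_fixPair_lt hj hi.ne) (hσ.fixPair hj hi.ne)
  calc ∑ μ : ι → κ, ∏ k, b k (μ k) * (if μ k = μ (σ k) then 1 else 0)
      = ∑ c, ∑ μ : ι → κ, ∏ k, mulIndicatorPair b i j c k (μ k) *
          (if μ k = μ (fixPair σ i j k) then 1 else 0) := by
        simp only [prod_mul_delta_eq_sum_fixPair hσ hj hi.ne]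
        exact sum_comm
    _ = ∑ c, b i c * b j c * ∏ k ∈ (univ.erase i).erase j, pairFactor σ b k := by
        simp only [ih' _ rfl, prod_pairFactor_fixPair hσ hj hi.ne]
    _ = ∏ k, pairFactor σ b k := by
        rw [← sum_mul, prod_univ_eq_mul_mul_prod_erase_erase _ hi.ne]
        simp [pairFactor, hj, hji, not_lt.2 hi.le, not_le.2 hi, hi.ne']

end Contraction

section Involution

variable {ι : Type*} [Fintype ι] [LinearOrder ι] {σ : ι → ι}

lemma Function.Involutive.two_mul_card_filter_lt_le (hσ : Function.Involutive σ) :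
    2 * #{i | i < σ i} ≤ Fintype.card ι := by
  set S : Finset ι := {i | i < σ i}
  have hdisj : Disjoint S (S.image σ) := by
    simp only [S, disjoint_left, mem_image, mem_filter, mem_univ, true_and]
    rintro _ hi ⟨j, hj, rfl⟩
    rw [hσ j] at hi
    exact lt_asymm hi hj
  rw [two_mul]
  nth_rw 2 [← card_image_of_injective _ hσ.injective]
  rw [← card_union_of_disjoint hdisj]
  exact card_le_univ _

end Involution

section Dual

theorem LinearIndependent.exists_dotProduct_eq_ite {K n ι : Type*} [Field K] [Fintype n]
    [DecidableEq n] [DecidableEq ι] {q : ι → n → K} (hq : LinearIndependent K q) :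
    ∃ p : ι → n → K, ∀ k l, p k ⬝ᵥ q l = if k = l then 1 else 0 := by
  choose g hg using fun k => LinearMap.exists_extend ((Module.Basis.span hq).coord k)
  refine ⟨fun k => (dotProductEquiv K n).symm (g k), fun k l => ?_⟩
  have hql : q l = (Submodule.span K (Set.range q)).subtype (Module.Basis.span hq l) := by
    simp [Module.Basis.span_apply]
  rw [← dotProductEquiv_apply_apply, LinearEquiv.apply_symm_apply, hql, ← LinearMap.comp_apply,
    hg, Module.Basis.coord_apply, Module.Basis.repr_self, Finsupp.single_apply]
  exact if_congr eq_comm rfl rfl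

lemma EuclideanSpace.ofLp_dotProduct_ofLp {n : Type*} [Fintype n] (x y : EuclideanSpace ℝ n) :
    x.ofLp ⬝ᵥ y.ofLp = inner ℝ x y := by
  simp [EuclideanSpace.inner_eq_star_dotProduct, dotProduct_comm]

theorem exists_orthonormal_dotProduct_eq_zero {n ι α : Type*} [Fintype n] [Fintype ι]
    [DecidableEq α] (q : ι → n → ℝ) (E : Finset α) (hE : #E + Fintype.card ι ≤ Fintype.card n) :
    ∃ w : α → n → ℝ, (∀ a ∈ E, ∀ b ∈ E, w a ⬝ᵥ w b = if a = b then 1 else 0) ∧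
      ∀ a l, w a ⬝ᵥ q l = 0 := by
  set V := Submodule.span ℝ (Set.range fun l => WithLp.toLp 2 (q l))
  have hV : #E ≤ Module.finrank ℝ Vᗮ := by
    have h1 := V.finrank_add_finrank_orthogonal
    have h2 : Module.finrank ℝ V ≤ Fintype.card ι := finrank_range_le_card _
    rw [finrank_euclideanSpace] at h1
    omega
  set b := stdOrthonormalBasis ℝ Vᗮ
  set e : E ↪ Fin (Module.finrank ℝ Vᗮ) := E.equivFin.toEmbedding.trans (Fin.castLEEmb hV)
  refine ⟨fun a => if h : a ∈ E then (b (e ⟨a, h⟩) : EuclideanSpace ℝ n).ofLp else 0,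
    fun a ha a' ha' => ?_, fun a l => ?_⟩
  · simp only [dif_pos ha, dif_pos ha', EuclideanSpace.ofLp_dotProduct_ofLp,
      ← Submodule.coe_inner, orthonormal_iff_ite.1 b.orthonormal, e.injective.eq_iff,
      Subtype.mk.injEq]
  · by_cases ha : a ∈ E
    · simp only [dif_pos ha]
      rw [← WithLp.ofLp_toLp 2 (q l), EuclideanSpace.ofLp_dotProduct_ofLp]
      exact Submodule.inner_left_of_mem_orthogonal (Submodule.subset_span (Set.mem_range_self l))
        (b _).2
    · simp [dif_neg ha]

end Dual

theorem linearIndependent_of_forall_exists_dual {ι R M : Type*} [Ring R] [AddCommGroup M]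
    [Module R M] {v : ι → M}
    (h : ∀ s : Finset ι, s.Nonempty →
      ∃ i ∈ s, ∃ f : M →ₗ[R] R, f (v i) = 1 ∧ ∀ j ∈ s, j ≠ i → f (v j) = 0) :
    LinearIndependent R v := by
  rw [linearIndependent_iff]
  intro l hl
  by_contra hne
  obtain ⟨i, hi, f, hfi, hfj⟩ := h l.support (Finsupp.support_nonempty_iff.2 hne)
  have := congrArg f hl
  rw [Finsupp.linearCombination_apply, map_finsuppSum, map_zero,
    Finsupp.sum_eq_single i
      (fun j hj hji => by rw [map_smul, hfj j (Finsupp.mem_support_iff.2 hj) hji, smul_zero])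
      (fun _ => by simp), map_smul, hfi, smul_eq_mul, mul_one] at this
  exact Finsupp.mem_support_iff.1 hi this

section Monomial

variable {D r m : ℕ}

def partner (P : Fin r → Fin m ⊕ Fin r) (i : Fin r) : Fin r :=
  Sum.elim (fun _ => i) id (P i)

lemma IsMonomialDatum.involutive_partner {P : Fin r → Fin m ⊕ Fin r} (hP : IsMonomialDatum P) :
    Function.Involutive (partner P) := by
  intro i
  cases h : P i with
  | inl k => simp [partner, h]
  | inr j => simp [partner, h, (hP i j h).2]

def labelledSlots (P : Fin r → Fin m ⊕ Fin r) : Finset (Fin r) := {i | (P i).isLeft}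

def deltaPairs (P : Fin r → Fin m ⊕ Fin r) : Finset (Sym2 (Fin r)) :=
  ({i | i < partner P i} : Finset (Fin r)).image fun i => s(i, partner P i)

lemma IsMonomialDatum.mk_mem_deltaPairs {P : Fin r → Fin m ⊕ Fin r} (hP : IsMonomialDatum P)
    {i j : Fin r} (h : P i = .inr j) : s(i, j) ∈ deltaPairs P := by
  obtain ⟨hji, hPj⟩ := hP i j h
  simp only [deltaPairs, mem_image, mem_filter, mem_univ, true_and]
  rcases lt_or_gt_of_ne hji with hlt | hlt
  · exact ⟨j, by simpa [partner, hPj] using hlt, by simp [partner, hPj, Sym2.eq_swap]⟩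
  · exact ⟨i, by simpa [partner, h] using hlt, by simp [partner, h]⟩

lemma IsMonomialDatum.two_mul_card_deltaPairs_le {P : Fin r → Fin m ⊕ Fin r}
    (hP : IsMonomialDatum P) : 2 * #(deltaPairs P) ≤ r := by
  calc 2 * #(deltaPairs P) ≤ 2 * #({i | i < partner P i} : Finset (Fin r)) :=
        Nat.mul_le_mul_left 2 card_image_le
    _ ≤ r := by simpa using hP.involutive_partner.two_mul_card_filter_lt_le

def pureTensor {ι κ R : Type*} [Fintype ι] [CommMonoid R] (u : ι → κ → R) : (ι → κ) → R :=
  fun μ => ∏ i, u i (μ i)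

def slotPairing (q : Fin m → Fin D → ℝ) (u : Fin r → Fin D → ℝ) (P : Fin r → Fin m ⊕ Fin r)
    (i : Fin r) : ℝ :=
  Sum.elim (fun k => u i ⬝ᵥ q k) (fun j => if i < j then u i ⬝ᵥ u j else 1) (P i)

lemma monomialTensor_eq_prod (q : Fin m → Fin D → ℝ) (P : Fin r → Fin m ⊕ Fin r)
    (μ : Fin r → Fin D) :
    monomialTensor q P μ = ∏ i, Sum.elim q (fun _ _ => 1) (P i) (μ i) *
      (if μ i = μ (partner P i) then 1 else 0) := by
  refine prod_congr rfl fun i _ => ?_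
  cases h : P i <;> simp [partner, h]

theorem monomialTensor_dotProduct_pureTensor (q : Fin m → Fin D → ℝ)
    {P : Fin r → Fin m ⊕ Fin r} (hP : IsMonomialDatum P) (u : Fin r → Fin D → ℝ) :
    monomialTensor q P ⬝ᵥ pureTensor u = ∏ i, slotPairing q u P i := by
  simp only [dotProduct, pureTensor, monomialTensor_eq_prod, ← prod_mul_distrib, mul_right_comm]
  rw [sum_prod_mul_delta hP.involutive_partner
    (fun i a => Sum.elim q (fun _ _ => 1) (P i) a * u i a)]
  refine prod_congr rfl fun i _ => ?_
  cases h : P i with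
  | inl k => simp [pairFactor, slotPairing, partner, h, dotProduct, mul_comm]
  | inr j =>
    obtain ⟨hji, hPj⟩ := hP i j h
    rcases lt_or_gt_of_ne hji with hlt | hlt
    · simp [pairFactor, slotPairing, partner, h, hlt, not_lt.2 hlt.le]
    · simp [pairFactor, slotPairing, partner, h, hPj, hlt, not_lt.2 hlt.le, hji, dotProduct]

end Monomial

section Separation

variable {D r m : ℕ} {q p : Fin m → Fin D → ℝ} {w : Sym2 (Fin r) → Fin D → ℝ}
  {P₀ P : Fin r → Fin m ⊕ Fin r}

def testVectors (p : Fin m → Fin D → ℝ) (w : Sym2 (Fin r) → Fin D → ℝ)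
    (P₀ : Fin r → Fin m ⊕ Fin r) : Fin r → Fin D → ℝ :=
  fun i => Sum.elim p (fun j => w s(i, j)) (P₀ i)

variable (hp : ∀ k l, p k ⬝ᵥ q l = if k = l then 1 else 0)
  (hw : ∀ a ∈ deltaPairs P₀, ∀ b ∈ deltaPairs P₀, w a ⬝ᵥ w b = if a = b then 1 else 0)
  (hwq : ∀ a l, w a ⬝ᵥ q l = 0)
include hp hw

lemma slotPairing_testVectors_self (hP₀ : IsMonomialDatum P₀) (i : Fin r) :
    slotPairing q (testVectors p w P₀) P₀ i = 1 := by
  cases h : P₀ i with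
  | inl k => simp [slotPairing, testVectors, h, hp]
  | inr j =>
    have hmem := hP₀.mk_mem_deltaPairs h
    simp [slotPairing, testVectors, h, (hP₀ i j h).2, Sym2.eq_swap, hw _ hmem _ hmem]

include hwq

lemma eq_of_forall_slotPairing_testVectors_ne_zero (hP₀ : IsMonomialDatum P₀)
    (hP : IsMonomialDatum P) (hcard : #(labelledSlots P₀) ≤ #(labelledSlots P))
    (hne : ∀ i, slotPairing q (testVectors p w P₀) P i ≠ 0) : P = P₀ := by
  have hlabel : ∀ i k, P i = .inl k → P₀ i = .inl k := by
    intro i k h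
    have := hne i
    cases h₀ : P₀ i with
    | inl k' =>
      simp only [slotPairing, testVectors, h, h₀, Sum.elim_inl, hp, ne_eq, ite_eq_right_iff,
        one_ne_zero, imp_false, not_not] at this
      rw [this]
    | inr j => simp [slotPairing, testVectors, h, h₀, hwq] at this
  have hL : labelledSlots P = labelledSlots P₀ := by
    refine eq_of_subset_of_card_le (fun i hi => ?_) hcard
    simp only [labelledSlots, mem_filter, mem_univ, true_and, Sum.isLeft_iff] at hi ⊢
    obtain ⟨k, hk⟩ := hi
    exact ⟨k, hlabel i k hk⟩
  have hP₀_inr : ∀ i j, P i = .inr j → ∃ j', P₀ i = .inr j' := by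
    intro i j h
    have hi : i ∉ labelledSlots P := by simp [labelledSlots, h]
    rw [hL] at hi
    simpa [labelledSlots, Sum.isRight_iff] using hi
  have hpartner : ∀ i j, P i = .inr j → i < j → P₀ i = .inr j := by
    intro i j h hij
    obtain ⟨i', hi'⟩ := hP₀_inr i j h
    obtain ⟨j', hj'⟩ := hP₀_inr j i (hP i j h).2
    have := hne i
    simp only [slotPairing, testVectors, h, hi', hj', Sum.elim_inr, if_pos hij,
      hw _ (hP₀.mk_mem_deltaPairs hi') _ (hP₀.mk_mem_deltaPairs hj'), ne_eq, ite_eq_right_iff,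
      one_ne_zero, imp_false, not_not] at this
    rcases Sym2.eq_iff.1 this with ⟨rfl, -⟩ | ⟨-, rfl⟩
    · exact absurd hij (lt_irrefl i)
    · exact hi'
  funext i
  cases h : P i with
  | inl k => exact (hlabel i k h).symm
  | inr j =>
    obtain ⟨hji, hPj⟩ := hP i j h
    rcases lt_or_gt_of_ne hji with hlt | hlt
    · exact (hP₀ j i (hpartner j i hPj hlt)).2.symm
    · exact (hpartner i j h hlt).symm

end Separation

theorem exists_pureTensor_separating {D r m : ℕ} {q : Fin m → Fin D → ℝ}
    (hq : LinearIndependent ℝ q) (hr : r ≤ 2 * (D - m) + 1) {P₀ : Fin r → Fin m ⊕ Fin r}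
    (hP₀ : IsMonomialDatum P₀) :
    ∃ u : Fin r → Fin D → ℝ, monomialTensor q P₀ ⬝ᵥ pureTensor u = 1 ∧
      ∀ P, IsMonomialDatum P → #(labelledSlots P₀) ≤ #(labelledSlots P) →
        monomialTensor q P ⬝ᵥ pureTensor u ≠ 0 → P = P₀ := by
  obtain ⟨p, hp⟩ := hq.exists_dotProduct_eq_ite
  have hm : m ≤ D := by simpa using hq.fintype_card_le_finrank
  have hpairs := hP₀.two_mul_card_deltaPairs_le
  obtain ⟨w, hw, hwq⟩ := exists_orthonormal_dotProduct_eq_zero q (deltaPairs P₀)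
    (by simp only [Fintype.card_fin]; omega)
  refine ⟨testVectors p w P₀, ?_, fun P hP hcard hne => ?_⟩
  · rw [monomialTensor_dotProduct_pureTensor q hP₀]
    exact prod_eq_one fun i _ => slotPairing_testVectors_self hp hw hP₀ i
  · rw [monomialTensor_dotProduct_pureTensor q hP, prod_ne_zero_iff] at hne
    exact eq_of_forall_slotPairing_testVectors_ne_zero hp hw hwq hP₀ hP hcard
      fun i => hne i (mem_univ i)

theorem stmt_1_general (D r m : ℕ) (q : Fin m → (Fin D → ℝ))
    (hq : LinearIndependent ℝ q) (hr : r ≤ 2 * (D - m) + 1) :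
    LinearIndependent ℝ
      ((↑) : {t : (Fin r → Fin D) → ℝ //
          ∃ P : Fin r → Fin m ⊕ Fin r, IsMonomialDatum P ∧ t = monomialTensor q P} →
        ((Fin r → Fin D) → ℝ)) := by
  refine linearIndependent_of_forall_exists_dual fun s hs => ?_
  obtain ⟨t₀, ht₀, hmin⟩ := s.exists_min_image (fun t => #(labelledSlots t.2.choose)) hs
  obtain ⟨hP₀, ht₀_eq⟩ := t₀.2.choose_spec
  obtain ⟨u, hu₀, hu⟩ := exists_pureTensor_separating hq hr hP₀
  refine ⟨t₀, ht₀, (dotProductBilin ℝ ℝ).flip (pureTensor u), by simpa [← ht₀_eq] using hu₀,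
    fun t ht hne => ?_⟩
  obtain ⟨hP, ht_eq⟩ := t.2.choose_spec
  by_contra h
  refine hne (Subtype.ext ?_)
  rw [LinearMap.flip_apply, dotProductBilin_apply_apply, ht_eq] at h
  rw [ht_eq, ht₀_eq, hu _ hP (hmin t ht) h]

/-- Lemma C.1: for `m` linearly independent vectors in `ℝ^D` and `0 < r ≤ 2(D-m)+1`,
the (inequivalent) rank-`r` tensor monomials built from Kronecker deltas and the
given vectors are linearly independent. -/
theorem stmt_1 (D r m : ℕ) (q : Fin m → (Fin D → ℝ))
    (hq : LinearIndependent ℝ q) (hr0 : 0 < r) (hr : r ≤ 2 * (D - m) + 1) :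
    LinearIndependent ℝ
      ((↑) : {t : (Fin r → Fin D) → ℝ //
          ∃ P : Fin r → Fin m ⊕ Fin r, IsMonomialDatum P ∧ t = monomialTensor q P} →
        ((Fin r → Fin D) → ℝ)) :=
  stmt_1_general D r m q hq hr
end

section
/- For all real numbers 0 ≤ q ≤ p ≤ P, all Λ > 0, and every natural number k, there exists a constant C_k > 0 (depending only on k) such that ∫_Λ^∞ (log₊(P/λ))^k / ((λ+p)(λ+q)) dλ ≤ C_k (1 + (log₊(P/(Λ+q)))^{k+1}) / (Λ + p + q), where log₊ x := log max(1,x). -/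
/-!
Split `(Λ, ∞)` at `m = max Λ q` and `T = max Λ P`, and write `D = Λ + p + q`,
`B = 1 + log₊ (P / (Λ + q))`. Since `Λ < l` and `q ≤ p`, the factor `l + p` is at least `D / 2`.
On `(Λ, m]` one has `l ≤ q`, so `log₊ (P / l) ≤ B (1 + log₊ (q / l))`, and the polynomial bound
`(1 + log y) ^ k ≲ √y` makes the integrand at most a multiple of `√(q / l) / (D q)`, whose integral
over `(0, q]` is `O(B ^ k / D)`. On `(m, T]` one has `log₊ (P / l) ≤ B`, the integrand is
`O(B ^ k / (D l))` and `log (T / m) ≤ B`. On `(T, ∞)` the logarithm vanishes and the integrand is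
at most `l⁻²`, with integral `1 / T ≤ 3 / D`.
-/

noncomputable def logPlus (x : ℝ) : ℝ := Real.log (max 1 x)

open Real MeasureTheory Set

lemma logPlus_nonneg (x : ℝ) : 0 ≤ logPlus x := log_nonneg (le_max_left 1 x)

lemma logPlus_mono {x y : ℝ} (h : x ≤ y) : logPlus x ≤ logPlus y :=
  log_le_log (zero_lt_one.trans_le (le_max_left 1 x)) (max_le_max le_rfl h)

lemma logPlus_of_le_one {x : ℝ} (h : x ≤ 1) : logPlus x = 0 := by
  rw [logPlus, max_eq_left h, log_one]

lemma logPlus_of_one_le {x : ℝ} (h : 1 ≤ x) : logPlus x = log x := by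
  rw [logPlus, max_eq_right h]

lemma logPlus_mul_le {x y : ℝ} (hy : 0 ≤ y) :
    logPlus (x * y) ≤ logPlus x + logPlus y := by
  have h1x : (1 : ℝ) ≤ max 1 x := le_max_left 1 x
  have h1y : (1 : ℝ) ≤ max 1 y := le_max_left 1 y
  unfold logPlus
  rw [← log_mul (by positivity) (by positivity)]
  refine log_le_log (by positivity) (max_le (one_le_mul_of_one_le_of_one_le h1x h1y) ?_)
  exact mul_le_mul (le_max_right 1 x) (le_max_right 1 y) hy (zero_le_one.trans h1x)

lemma logPlus_le_one_add_of_le_two_mul {x y : ℝ} (hy : 0 ≤ y) (h : x ≤ 2 * y) :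
    logPlus x ≤ 1 + logPlus y := by
  have h2 : logPlus 2 ≤ 1 := by
    rw [logPlus_of_one_le one_le_two]
    exact log_two_lt_d9.le.trans (by norm_num)
  calc logPlus x ≤ logPlus (2 * y) := logPlus_mono h
    _ ≤ logPlus 2 + logPlus y := logPlus_mul_le hy
    _ ≤ 1 + logPlus y := by linarith

lemma one_add_logPlus_pow_le (k : ℕ) {y : ℝ} (hy : 1 ≤ y) :
    (1 + logPlus y) ^ k ≤ (2 * k + 1) ^ k * y ^ (1 / 2 : ℝ) := by
  rcases k.eq_zero_or_pos with rfl | hk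
  · simpa using one_le_rpow hy (by norm_num : (0 : ℝ) ≤ 1 / 2)
  set ε : ℝ := 1 / (2 * k) with hε_def
  have hε : 0 < ε := by positivity
  have hyε : 1 ≤ y ^ ε := one_le_rpow hy hε.le
  have hlog : 1 + logPlus y ≤ (2 * k + 1) * y ^ ε := by
    have h := log_le_rpow_div (zero_le_one.trans hy) hε
    have h2k : y ^ ε / ε = 2 * k * y ^ ε := by rw [hε_def]; field_simp
    rw [logPlus_of_one_le hy]
    nlinarith
  calc (1 + logPlus y) ^ k ≤ ((2 * k + 1) * y ^ ε) ^ k :=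
        pow_le_pow_left₀ (add_nonneg zero_le_one (logPlus_nonneg y)) hlog k
    _ = (2 * k + 1) ^ k * y ^ (1 / 2 : ℝ) := by
      rw [mul_pow, ← rpow_natCast (y ^ ε), ← rpow_mul (by linarith)]
      congr 2
      rw [hε_def]
      field_simp

lemma div_le_two_mul_div {P a b : ℝ} (hP : 0 ≤ P) (ha : 0 < a) (h : a ≤ 2 * b) :
    P / b ≤ 2 * (P / a) := by
  have hb : 0 < b := by linarith
  rw [div_le_iff₀ hb, mul_comm, ← mul_assoc, mul_div_assoc', le_div_iff₀ ha]
  nlinarith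

lemma div_rpow_half_eqOn_Ioc {q : ℝ} :
    EqOn (fun l => (q / l) ^ (1 / 2 : ℝ)) (fun l => q ^ (1 / 2 : ℝ) * l ^ (-(1 / 2) : ℝ))
      (Ioc 0 q) := fun l hl => by
  simp only
  rw [div_rpow (hl.1.le.trans hl.2) hl.1.le, rpow_neg hl.1.le, div_eq_mul_inv]

lemma integrableOn_Ioc_zero_div_rpow_half {q : ℝ} (hq : 0 ≤ q) :
    IntegrableOn (fun l => (q / l) ^ (1 / 2 : ℝ)) (Ioc 0 q) := by
  refine IntegrableOn.congr_fun ?_ div_rpow_half_eqOn_Ioc.symm measurableSet_Ioc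
  exact ((intervalIntegrable_iff_integrableOn_Ioc_of_le hq).1
    (intervalIntegral.intervalIntegrable_rpow' (by norm_num))).const_mul _

lemma integral_Ioc_zero_div_rpow_half {q : ℝ} (hq : 0 ≤ q) :
    ∫ l in Ioc 0 q, (q / l) ^ (1 / 2 : ℝ) = 2 * q := by
  rw [setIntegral_congr_fun measurableSet_Ioc div_rpow_half_eqOn_Ioc, integral_const_mul,
    ← intervalIntegral.integral_of_le hq, integral_rpow (Or.inl (by norm_num))]
  rw [show -(1 / 2 : ℝ) + 1 = 1 / 2 by norm_num, zero_rpow (by norm_num), sub_zero,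
    ← sqrt_eq_rpow, mul_div_assoc', mul_self_sqrt hq]
  ring

def HasMajorantOn {α : Type*} [MeasurableSpace α] (f : α → ℝ) (s : Set α) (μ : Measure α)
    (A : ℝ) : Prop :=
  ∃ g : α → ℝ, IntegrableOn g s μ ∧ (∀ x ∈ s, f x ≤ g x) ∧ ∫ x in s, g x ∂μ ≤ A

namespace HasMajorantOn

variable {α : Type*} [MeasurableSpace α] {μ : Measure α} {f : α → ℝ} {s t : Set α} {A B : ℝ}

lemma union (hs : HasMajorantOn f s μ A) (ht : HasMajorantOn f t μ B) (hst : Disjoint s t)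
    (hs' : MeasurableSet s) (ht' : MeasurableSet t) : HasMajorantOn f (s ∪ t) μ (A + B) := by
  classical
  obtain ⟨g, hg, hfg, hgA⟩ := hs
  obtain ⟨h, hh, hfh, hhB⟩ := ht
  have hgs : EqOn (s.piecewise g h) g s := piecewise_eqOn s g h
  have hht : EqOn (s.piecewise g h) h t := fun x hx =>
    piecewise_eq_of_notMem _ _ _ (hst.notMem_of_mem_right hx)
  have hint_s : IntegrableOn (s.piecewise g h) s μ := hg.congr_fun hgs.symm hs'
  have hint_t : IntegrableOn (s.piecewise g h) t μ := hh.congr_fun hht.symm ht'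
  refine ⟨s.piecewise g h, hint_s.union hint_t, ?_, ?_⟩
  · rintro x (hx | hx)
    · rw [hgs hx]; exact hfg x hx
    · rw [hht hx]; exact hfh x hx
  · rw [setIntegral_union hst ht' hint_s hint_t, setIntegral_congr_fun hs' hgs,
      setIntegral_congr_fun ht' hht]
    exact add_le_add hgA hhB

lemma setIntegral_le (hf : HasMajorantOn f s μ A) (hf0 : ∀ x ∈ s, 0 ≤ f x)
    (hs : MeasurableSet s) : ∫ x in s, f x ∂μ ≤ A := by
  obtain ⟨g, hg, hfg, hgA⟩ := hf
  refine (integral_mono_of_nonneg ?_ hg ?_).trans hgA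
  · exact (ae_restrict_iff' hs).2 (ae_of_all _ hf0)
  · exact (ae_restrict_iff' hs).2 (ae_of_all _ hfg)

end HasMajorantOn

noncomputable def logPlusKernel (k : ℕ) (p q P l : ℝ) : ℝ :=
  logPlus (P / l) ^ k / ((l + p) * (l + q))

section logPlusKernel

variable (k : ℕ) {p q P Λ l : ℝ}

lemma logPlusKernel_nonneg (hp : 0 ≤ p) (hq : 0 ≤ q) (hl : 0 < l) :
    0 ≤ logPlusKernel k p q P l :=
  div_nonneg (pow_nonneg (logPlus_nonneg _) k) (by positivity)

lemma logPlusKernel_le_rpow_half (hqp : q ≤ p) (hP : 0 ≤ P) (hΛ : 0 < Λ) (hΛl : Λ < l)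
    (hlq : l ≤ q) :
    logPlusKernel k p q P l ≤ 2 * (2 * k + 1) ^ k * (1 + logPlus (P / (Λ + q))) ^ k /
      (Λ + p + q) / q * (q / l) ^ (1 / 2 : ℝ) := by
  set B := 1 + logPlus (P / (Λ + q))
  have hl : 0 < l := hΛ.trans hΛl
  have hq : 0 < q := hl.trans_le hlq
  have hp : 0 < p := hq.trans_le hqp
  have hB : 1 ≤ B := le_add_of_nonneg_right (logPlus_nonneg _)
  have hPl : P / l ≤ 2 * (P / (Λ + q)) * (q / l) := by
    have : 2 * (P / (Λ + q)) * (q / l) = P / l * (2 * q / (Λ + q)) := by field_simp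
    rw [this]
    exact le_mul_of_one_le_right (by positivity) ((one_le_div (by positivity)).2 (by linarith))
  have hlog : logPlus (P / l) ≤ B * (1 + logPlus (q / l)) := by
    calc logPlus (P / l) ≤ logPlus (2 * (P / (Λ + q))) + logPlus (q / l) :=
          (logPlus_mono hPl).trans (logPlus_mul_le (by positivity))
      _ ≤ B + logPlus (q / l) := by
          gcongr; exact logPlus_le_one_add_of_le_two_mul (by positivity) le_rfl
      _ ≤ B * (1 + logPlus (q / l)) := by nlinarith [logPlus_nonneg (q / l)]
  have hnum : logPlus (P / l) ^ k ≤ B ^ k * ((2 * k + 1) ^ k * (q / l) ^ (1 / 2 : ℝ)) := by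
    calc logPlus (P / l) ^ k ≤ (B * (1 + logPlus (q / l))) ^ k :=
          pow_le_pow_left₀ (logPlus_nonneg _) hlog k
      _ = B ^ k * (1 + logPlus (q / l)) ^ k := mul_pow _ _ _
      _ ≤ B ^ k * ((2 * k + 1) ^ k * (q / l) ^ (1 / 2 : ℝ)) := by
          gcongr; exact one_add_logPlus_pow_le k ((one_le_div hl).2 hlq)
  have hden : (Λ + p + q) * q / 2 ≤ (l + p) * (l + q) := by nlinarith
  calc logPlusKernel k p q P l
      ≤ B ^ k * ((2 * k + 1) ^ k * (q / l) ^ (1 / 2 : ℝ)) / ((Λ + p + q) * q / 2) :=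
        div_le_div₀ (by positivity) hnum (by positivity) hden
    _ = _ := by field_simp

lemma logPlusKernel_le_inv (hq : 0 ≤ q) (hqp : q ≤ p) (hP : 0 ≤ P) (hΛ : 0 < Λ)
    (hΛl : Λ ≤ l) (hql : q ≤ l) :
    logPlusKernel k p q P l ≤ 2 * (1 + logPlus (P / (Λ + q))) ^ k / (Λ + p + q) * l⁻¹ := by
  have hl : 0 < l := hΛ.trans_le hΛl
  have hp : 0 ≤ p := hq.trans hqp
  have hlog : logPlus (P / l) ≤ 1 + logPlus (P / (Λ + q)) :=
    logPlus_le_one_add_of_le_two_mul (by positivity)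
      (div_le_two_mul_div hP (by positivity) (by linarith))
  have hden : (Λ + p + q) * l / 2 ≤ (l + p) * (l + q) := by nlinarith
  calc logPlusKernel k p q P l ≤ (1 + logPlus (P / (Λ + q))) ^ k / ((Λ + p + q) * l / 2) :=
        div_le_div₀ (pow_nonneg (by linarith [logPlus_nonneg (P / (Λ + q))]) k)
          (pow_le_pow_left₀ (logPlus_nonneg _) hlog k) (by positivity) hden
    _ = _ := by field_simp

lemma logPlusKernel_le_rpow_neg_two (hp : 0 ≤ p) (hq : 0 ≤ q) (hl : 0 < l) (hPl : P ≤ l) :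
    logPlusKernel k p q P l ≤ l ^ (-2 : ℝ) := by
  have hnum : logPlus (P / l) ^ k ≤ 1 := by
    rw [logPlus_of_le_one ((div_le_one hl).2 hPl)]
    exact pow_le_one₀ le_rfl zero_le_one
  rw [rpow_neg hl.le, rpow_two, ← one_div]
  exact div_le_div₀ zero_le_one hnum (by positivity) (by nlinarith)

end logPlusKernel

section pieces

variable (k : ℕ) {p q P Λ : ℝ}

lemma hasMajorantOn_logPlusKernel_Ioc_max (hq : 0 ≤ q) (hqp : q ≤ p) (hP : 0 ≤ P) (hΛ : 0 < Λ) :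
    HasMajorantOn (logPlusKernel k p q P) (Ioc Λ (max Λ q)) volume
      (4 * (2 * k + 1) ^ k * (1 + logPlus (P / (Λ + q))) ^ k / (Λ + p + q)) := by
  have hp : 0 ≤ p := hq.trans hqp
  have hB : 0 ≤ 1 + logPlus (P / (Λ + q)) := by linarith [logPlus_nonneg (P / (Λ + q))]
  set c := 2 * (2 * k + 1) ^ k * (1 + logPlus (P / (Λ + q))) ^ k / (Λ + p + q) / q with hc_def
  have hc : 0 ≤ c := by positivity
  have hsub : Ioc Λ (max Λ q) ⊆ Ioc 0 q := fun l hl =>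
    ⟨hΛ.trans hl.1, (le_max_iff.1 hl.2).resolve_left hl.1.not_ge⟩
  have hint : IntegrableOn (fun l => c * (q / l) ^ (1 / 2 : ℝ)) (Ioc 0 q) :=
    (integrableOn_Ioc_zero_div_rpow_half hq).const_mul c
  refine ⟨fun l => c * (q / l) ^ (1 / 2 : ℝ), hint.mono_set hsub,
    fun l hl => logPlusKernel_le_rpow_half k hqp hP hΛ hl.1 (hsub hl).2, ?_⟩
  calc ∫ l in Ioc Λ (max Λ q), c * (q / l) ^ (1 / 2 : ℝ)
      ≤ ∫ l in Ioc 0 q, c * (q / l) ^ (1 / 2 : ℝ) :=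
        setIntegral_mono_set hint ((ae_restrict_iff' measurableSet_Ioc).2 (ae_of_all _
          fun l hl => by have := hl.1; positivity)) hsub.eventuallyLE
    _ = 4 * (2 * k + 1) ^ k * (1 + logPlus (P / (Λ + q))) ^ k / (Λ + p + q) * (q / q) := by
        rw [integral_const_mul, integral_Ioc_zero_div_rpow_half hq, hc_def]; ring
    _ ≤ _ := mul_le_of_le_one_right (by positivity) (div_self_le_one q)

lemma hasMajorantOn_logPlusKernel_Ioc_max_max (hq : 0 ≤ q) (hqp : q ≤ p) (hpP : p ≤ P)
    (hΛ : 0 < Λ) :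
    HasMajorantOn (logPlusKernel k p q P) (Ioc (max Λ q) (max Λ P)) volume
      (2 * (1 + logPlus (P / (Λ + q))) ^ (k + 1) / (Λ + p + q)) := by
  have hP : 0 ≤ P := hq.trans (hqp.trans hpP)
  have hm : 0 < max Λ q := hΛ.trans_le (le_max_left _ _)
  have hmT : max Λ q ≤ max Λ P := max_le_max le_rfl (hqp.trans hpP)
  set B := 1 + logPlus (P / (Λ + q))
  have hB : 0 ≤ B := by linarith [logPlus_nonneg (P / (Λ + q))]
  have hp : 0 ≤ p := hq.trans hqp
  have hc : 0 ≤ 2 * B ^ k / (Λ + p + q) := by positivity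
  set c := 2 * B ^ k / (Λ + p + q)
  have hinv : IntegrableOn (fun l : ℝ => l⁻¹) (Ioc (max Λ q) (max Λ P)) :=
    (continuousOn_inv₀.mono fun l hl => (hm.trans_le hl.1).ne').integrableOn_Icc.mono_set
      Ioc_subset_Icc_self
  refine ⟨fun l => c * l⁻¹, hinv.const_mul c, fun l hl => logPlusKernel_le_inv k hq hqp hP hΛ
    ((le_max_left _ _).trans hl.1.le) ((le_max_right _ _).trans hl.1.le), ?_⟩
  have hlog : log (max Λ P / max Λ q) ≤ B := by
    have hratio : max Λ P / max Λ q ≤ max 1 (P / max Λ q) := by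
      rw [← max_div_div_right hm.le]
      exact max_le_max (div_le_one_of_le₀ (le_max_left _ _) hm.le) le_rfl
    calc log (max Λ P / max Λ q) ≤ logPlus (P / max Λ q) :=
          log_le_log (div_pos (hm.trans_le hmT) hm) hratio
      _ ≤ B := logPlus_le_one_add_of_le_two_mul (by positivity) (div_le_two_mul_div hP
          (by positivity) (by linarith [le_max_left Λ q, le_max_right Λ q]))
  rw [integral_const_mul, ← intervalIntegral.integral_of_le hmT,
    integral_inv (notMem_uIcc_of_lt hm (hm.trans_le hmT))]
  calc c * log (max Λ P / max Λ q) ≤ c * B := by gcongr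
    _ = 2 * B ^ (k + 1) / (Λ + p + q) := by ring

lemma hasMajorantOn_logPlusKernel_Ioi_max (hq : 0 ≤ q) (hqp : q ≤ p) (hpP : p ≤ P)
    (hΛ : 0 < Λ) :
    HasMajorantOn (logPlusKernel k p q P) (Ioi (max Λ P)) volume (3 / (Λ + p + q)) := by
  have hp : 0 ≤ p := hq.trans hqp
  have hT : 0 < max Λ P := hΛ.trans_le (le_max_left _ _)
  refine ⟨fun l => l ^ (-2 : ℝ), integrableOn_Ioi_rpow_of_lt (by norm_num) hT,
    fun l hl => logPlusKernel_le_rpow_neg_two k hp hq (hT.trans hl)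
      ((le_max_right _ _).trans hl.le), ?_⟩
  rw [integral_Ioi_rpow_of_lt (by norm_num) hT, show (-2 : ℝ) + 1 = -1 by norm_num,
    rpow_neg_one, neg_div_neg_eq, div_one, inv_eq_one_div, div_le_div_iff₀ hT (by positivity)]
  linarith [le_max_left Λ P, le_max_right Λ P]

end pieces

lemma piece_bounds_sum_le (k : ℕ) {M D : ℝ} (hM : 0 ≤ M) (hD : 0 < D) :
    4 * (2 * k + 1) ^ k * (1 + M) ^ k / D + (2 * (1 + M) ^ (k + 1) / D + 3 / D) ≤
      (4 * (2 * k + 1) ^ k + 5) * 2 ^ k * (1 + M ^ (k + 1)) / D := by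
  have hB : 1 ≤ 1 + M := le_add_of_nonneg_right hM
  have hBk : (1 + M) ^ k ≤ (1 + M) ^ (k + 1) := pow_le_pow_right₀ hB k.le_succ
  have hB1 : 1 ≤ (1 + M) ^ (k + 1) := one_le_pow₀ hB
  have hconvex : (1 + M) ^ (k + 1) ≤ 2 ^ k * (1 + M ^ (k + 1)) := by
    simpa using add_pow_le zero_le_one hM (k + 1)
  rw [← add_div, ← add_div, div_le_div_iff_of_pos_right hD]
  calc 4 * (2 * k + 1) ^ k * (1 + M) ^ k + (2 * (1 + M) ^ (k + 1) + 3)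
      ≤ 4 * (2 * k + 1) ^ k * (1 + M) ^ (k + 1) +
          (2 * (1 + M) ^ (k + 1) + 3 * (1 + M) ^ (k + 1)) := by
        gcongr; linarith
    _ = (4 * (2 * k + 1) ^ k + 5) * (1 + M) ^ (k + 1) := by ring
    _ ≤ (4 * (2 * k + 1) ^ k + 5) * (2 ^ k * (1 + M ^ (k + 1))) := by gcongr
    _ = (4 * (2 * k + 1) ^ k + 5) * 2 ^ k * (1 + M ^ (k + 1)) := by ring

theorem stmt_3 (k : ℕ) :
    ∃ C : ℝ, 0 < C ∧ ∀ p q P Λ : ℝ, 0 ≤ q → q ≤ p → p ≤ P → 0 < Λ →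
      (∫ l in Set.Ioi Λ, (logPlus (P / l)) ^ k / ((l + p) * (l + q))) ≤
        C * (1 + (logPlus (P / (Λ + q))) ^ (k + 1)) / (Λ + p + q) := by
  refine ⟨(4 * (2 * k + 1) ^ k + 5) * 2 ^ k, by positivity, fun p q P Λ hq hqp hpP hΛ => ?_⟩
  have hp : 0 ≤ p := hq.trans hqp
  have hmT : max Λ q ≤ max Λ P := max_le_max le_rfl (hqp.trans hpP)
  have htail := (hasMajorantOn_logPlusKernel_Ioc_max_max k hq hqp hpP hΛ).union
    (hasMajorantOn_logPlusKernel_Ioi_max k hq hqp hpP hΛ) Ioc_disjoint_Ioi_same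
    measurableSet_Ioc measurableSet_Ioi
  rw [Ioc_union_Ioi_eq_Ioi hmT] at htail
  have hall := (hasMajorantOn_logPlusKernel_Ioc_max k hq hqp (hp.trans hpP) hΛ).union htail
    Ioc_disjoint_Ioi_same measurableSet_Ioc measurableSet_Ioi
  rw [Ioc_union_Ioi_eq_Ioi (le_max_left Λ q)] at hall
  calc ∫ l in Ioi Λ, logPlusKernel k p q P l
      ≤ _ := hall.setIntegral_le (fun l hl => logPlusKernel_nonneg k hp hq (hΛ.trans hl))
        measurableSet_Ioi
    _ ≤ _ := piece_bounds_sum_le k (logPlus_nonneg _) (by positivity)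
end

section
/- For all p, q ∈ ℝ⁴, Λ' > 0, and 0 ≤ η ≤ Λ', ∫_0^1 |p| / (Λ' + |tp + q|) dt ≤ 2 (log 4 + log₊(|p|/(Λ'+η))). -/
open Real intervalIntegral MeasureTheory Set
open scoped RealInnerProductSpace

/-!
Put `s := -⟪p, q⟫ / ‖p‖²`. Cauchy–Schwarz applied to `⟪p, t • p + q⟫ = ‖p‖² (t - s)` gives
`‖t • p + q‖ ≥ ‖p‖ |t - s|`, and clamping `s` to `t₁ ∈ [0, 1]` keeps this for `t ∈ [0, 1]`.
The integral is therefore at most `∫₀¹ a / (L + a |t - t₁|) dt` with `a = ‖p‖`, `L = Λ'`, which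
splits at `t₁` into two logarithms, each at most `log ((L + a) / L)`. Finally, since
`L + η ≤ 2L`, `(L + a) / L ≤ 4 max 1 (a / (L + η))`.
-/

section LineDistance

variable {E : Type*} [NormedAddCommGroup E] [InnerProductSpace ℝ E]

lemma norm_mul_abs_sub_le_norm_smul_add (p q : E) (t : ℝ) :
    ‖p‖ * |t - (-⟪p, q⟫ / ‖p‖ ^ 2)| ≤ ‖t • p + q‖ := by
  rcases eq_or_ne p 0 with rfl | hp
  · simp
  have hpn : 0 < ‖p‖ := norm_pos_iff.mpr hp
  set s := -⟪p, q⟫ / ‖p‖ ^ 2 with hs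
  have hinner : ⟪p, t • p + q⟫ = ‖p‖ * (‖p‖ * (t - s)) := by
    rw [inner_add_right, real_inner_smul_right, real_inner_self_eq_norm_sq, hs]
    field_simp
    ring
  have hCS := abs_real_inner_le_norm p (t • p + q)
  rw [hinner, abs_mul, abs_mul, abs_of_pos hpn] at hCS
  exact le_of_mul_le_mul_left hCS hpn

lemma exists_mem_Icc_norm_mul_abs_sub_le_norm_smul_add (p q : E) :
    ∃ t₁ ∈ Icc (0 : ℝ) 1, ∀ t ∈ Icc (0 : ℝ) 1, ‖p‖ * |t - t₁| ≤ ‖t • p + q‖ := by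
  set s := -⟪p, q⟫ / ‖p‖ ^ 2
  refine ⟨projIcc (0 : ℝ) 1 zero_le_one s, Subtype.prop _, fun t ht => ?_⟩
  calc ‖p‖ * |t - projIcc 0 1 zero_le_one s|
      = ‖p‖ * |(projIcc 0 1 zero_le_one t : ℝ) - projIcc 0 1 zero_le_one s| := by
        rw [projIcc_of_mem _ ht]
    _ ≤ ‖p‖ * |t - s| := mul_le_mul_of_nonneg_left (abs_projIcc_sub_projIcc _) (norm_nonneg p)
    _ ≤ ‖t • p + q‖ := norm_mul_abs_sub_le_norm_smul_add p q t

end LineDistance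

section Majorant

variable {L a : ℝ}

lemma integral_div_add_mul_abs (hL : 0 < L) (ha : 0 ≤ a) {d : ℝ} (hd : 0 ≤ d) :
    ∫ x in 0..d, a / (L + a * |x|) = log ((L + a * d) / L) := by
  calc ∫ x in 0..d, a / (L + a * |x|) = a * ∫ x in 0..d, (L + a * x)⁻¹ := by
        rw [← intervalIntegral.integral_const_mul]
        refine integral_congr fun x hx => ?_
        rw [uIcc_of_le hd] at hx
        simp only [abs_of_nonneg hx.1, div_eq_mul_inv]
    _ = ∫ x in L..L + a * d, x⁻¹ := by simp
    _ = log ((L + a * d) / L) := integral_inv_of_pos hL (by positivity)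

lemma integral_div_add_mul_abs_sub (hL : 0 < L) (ha : 0 ≤ a) {t₁ : ℝ} (h0 : 0 ≤ t₁)
    (h1 : t₁ ≤ 1) :
    ∫ t in 0..1, a / (L + a * |t - t₁|) =
      log ((L + a * t₁) / L) + log ((L + a * (1 - t₁)) / L) := by
  set f : ℝ → ℝ := fun x => a / (L + a * |x|)
  have hf : ∀ u v, IntervalIntegrable f volume u v := fun u v =>
    (continuous_const.div (by fun_prop) fun x => by positivity).intervalIntegrable u v
  have hleft : ∫ x in -t₁..0, f x = ∫ x in 0..t₁, f x := by
    simpa [f] using (integral_comp_neg (a := 0) (b := t₁) f).symm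
  rw [integral_comp_sub_right f, zero_sub, ← integral_add_adjacent_intervals (hf _ 0) (hf 0 _),
    hleft, integral_div_add_mul_abs hL ha h0, integral_div_add_mul_abs hL ha (by linarith)]

lemma integral_div_add_mul_abs_sub_le (hL : 0 < L) (ha : 0 ≤ a) {t₁ : ℝ} (h0 : 0 ≤ t₁)
    (h1 : t₁ ≤ 1) :
    ∫ t in 0..1, a / (L + a * |t - t₁|) ≤ 2 * log ((L + a) / L) := by
  have hmono : ∀ s ∈ Icc (0 : ℝ) 1, log ((L + a * s) / L) ≤ log ((L + a) / L) := by
    rintro s ⟨hs0, hs1⟩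
    gcongr
    nlinarith
  rw [integral_div_add_mul_abs_sub hL ha h0 h1]
  linarith [hmono t₁ ⟨h0, h1⟩, hmono (1 - t₁) ⟨by linarith, by linarith⟩]

end Majorant

theorem integral_norm_div_add_norm_smul_add_le {E : Type*} [NormedAddCommGroup E]
    [InnerProductSpace ℝ E] (p q : E) {L : ℝ} (hL : 0 < L) :
    ∫ t in 0..1, ‖p‖ / (L + ‖t • p + q‖) ≤ 2 * log ((L + ‖p‖) / L) := by
  obtain ⟨t₁, ⟨h0, h1⟩, hline⟩ := exists_mem_Icc_norm_mul_abs_sub_le_norm_smul_add p q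
  calc ∫ t in 0..1, ‖p‖ / (L + ‖t • p + q‖) ≤ ∫ t in 0..1, ‖p‖ / (L + ‖p‖ * |t - t₁|) := by
        refine integral_mono_on zero_le_one ?_ ?_ fun t ht => ?_
        · exact (continuous_const.div (by fun_prop) fun t => by positivity).intervalIntegrable _ _
        · exact (continuous_const.div (by fun_prop) fun t => by positivity).intervalIntegrable _ _
        · gcongr
          exact hline t ht
    _ ≤ 2 * log ((L + ‖p‖) / L) := integral_div_add_mul_abs_sub_le hL (norm_nonneg p) h0 h1

lemma log_div_le_log_four_add_logPlus {L a η : ℝ} (hL : 0 < L) (ha : 0 ≤ a) (hη0 : 0 ≤ η)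
    (hη1 : η ≤ L) : log ((L + a) / L) ≤ log 4 + logPlus (a / (L + η)) := by
  have hLη : 0 < L + η := by linarith
  rw [logPlus, ← log_mul four_ne_zero (by positivity)]
  refine log_le_log (by positivity) ((div_le_iff₀ hL).mpr ?_)
  have hmax1 := le_max_left 1 (a / (L + η))
  have hmax2 := le_max_right 1 (a / (L + η))
  have hm : a / (L + η) * (L + η) = a := div_mul_cancel₀ a hLη.ne'
  rcases le_total a (L + η) with h | h
  · nlinarith
  · nlinarith

theorem stmt_10 (p q : EuclideanSpace ℝ (Fin 4)) (Λ' η : ℝ)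
    (hΛ : 0 < Λ') (hη0 : 0 ≤ η) (hη1 : η ≤ Λ') :
    (∫ t in (0:ℝ)..1, ‖p‖ / (Λ' + ‖t • p + q‖)) ≤
      2 * (Real.log 4 + logPlus (‖p‖ / (Λ' + η))) := by
  calc (∫ t in (0:ℝ)..1, ‖p‖ / (Λ' + ‖t • p + q‖)) ≤ 2 * log ((Λ' + ‖p‖) / Λ') :=
        integral_norm_div_add_norm_smul_add_le p q hΛ
    _ ≤ 2 * (log 4 + logPlus (‖p‖ / (Λ' + η))) := by
        gcongr
        exact log_div_le_log_four_add_logPlus hΛ (norm_nonneg p) hη0 hη1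
end

section
/- Let m ≥ 0, x, y ≥ 0, and let P⁰(t) = Σ_{k=0}^n c_k t^k be a polynomial with nonnegative coefficients. Define log_m t := log₊(max(t,m)). Then there exist polynomials P¹, P² of degree n with nonnegative coefficients such that P⁰(log_m √(x²+y²)) ≤ P¹(log_m y) + P²(log_m x). -/
/-- `log_m t := log₊ (max t m)`. -/
noncomputable def logm (m t : ℝ) : ℝ := logPlus (max t m)

/-!
The key inequality gives `log_m √(x² + y²) ≤ 2 max (log_m x) (log_m y) + log 2`; it comes from
Mathlib's `log⁺ (a + b) ≤ log 2 + log⁺ a + log⁺ b`, as `logPlus` agrees with `log⁺` on `[0, ∞)`.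
A polynomial `P` with nonnegative coefficients is monotone on `[0, ∞)`, so
`P (log_m √(x² + y²)) ≤ P (2 log_m y + log 2) + P (2 log_m x + log 2)`, and `t ↦ P (2 t + log 2)`
is again a polynomial of degree at most `n` with nonnegative coefficients.
-/

open Finset Real

lemma logPlus_eq_posLog {x : ℝ} (hx : 0 ≤ x) : logPlus x = log⁺ x :=
  (posLog_eq_log_max_one hx).symm

lemma logm_nonneg (m t : ℝ) : 0 ≤ logm m t :=
  log_nonneg (le_max_left _ _)

lemma sqrt_sq_add_sq_le_add {x y : ℝ} (hx : 0 ≤ x) (hy : 0 ≤ y) : √(x ^ 2 + y ^ 2) ≤ x + y :=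
  sqrt_le_iff.2 ⟨by positivity, by nlinarith⟩

lemma max_sqrt_sq_add_sq_le {x y : ℝ} (m : ℝ) (hx : 0 ≤ x) (hy : 0 ≤ y) :
    max √(x ^ 2 + y ^ 2) m ≤ max x m + max y m :=
  max_le ((sqrt_sq_add_sq_le_add hx hy).trans (add_le_add (le_max_left _ _) (le_max_left _ _)))
    (le_add_of_le_of_nonneg (le_max_right _ _) (hy.trans (le_max_left _ _)))

lemma logm_sqrt_sq_add_sq_le {x y : ℝ} (m : ℝ) (hx : 0 ≤ x) (hy : 0 ≤ y) :
    logm m √(x ^ 2 + y ^ 2) ≤ logm m x + logm m y + log 2 := by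
  have hxm : 0 ≤ max x m := hx.trans (le_max_left _ _)
  have hym : 0 ≤ max y m := hy.trans (le_max_left _ _)
  have hsm : 0 ≤ max √(x ^ 2 + y ^ 2) m := (sqrt_nonneg _).trans (le_max_left _ _)
  unfold logm
  rw [logPlus_eq_posLog hxm, logPlus_eq_posLog hym, logPlus_eq_posLog hsm]
  calc log⁺ (max √(x ^ 2 + y ^ 2) m) ≤ log⁺ (max x m + max y m) :=
        posLog_le_posLog hsm (max_sqrt_sq_add_sq_le m hx hy)
    _ ≤ log 2 + log⁺ (max x m) + log⁺ (max y m) := posLog_add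
    _ = _ := by ring

lemma sum_mul_pow_le_sum_mul_pow {ι : Type*} (s : Finset ι) (c : ι → ℝ) (e : ι → ℕ)
    (hc : ∀ i, 0 ≤ c i) {t u : ℝ} (ht : 0 ≤ t) (htu : t ≤ u) :
    ∑ i ∈ s, c i * t ^ e i ≤ ∑ i ∈ s, c i * u ^ e i :=
  sum_le_sum fun i _ => by gcongr; exact hc i

noncomputable def compAffineCoeff (c : ℕ → ℝ) (n : ℕ) (a b : ℝ) (j : ℕ) : ℝ :=
  ∑ k ∈ range (n + 1), c k * k.choose j * a ^ j * b ^ (k - j)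

lemma compAffineCoeff_nonneg {c : ℕ → ℝ} (hc : ∀ k, 0 ≤ c k) (n : ℕ) {a b : ℝ} (ha : 0 ≤ a)
    (hb : 0 ≤ b) (j : ℕ) : 0 ≤ compAffineCoeff c n a b j :=
  sum_nonneg fun k _ => by have := hc k; positivity

lemma sum_mul_affine_pow (c : ℕ → ℝ) (n : ℕ) (a b t : ℝ) :
    ∑ k ∈ range (n + 1), c k * (a * t + b) ^ k =
      ∑ j ∈ range (n + 1), compAffineCoeff c n a b j * t ^ j := by
  have hexpand : ∀ k ∈ range (n + 1), (a * t + b) ^ k =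
      ∑ j ∈ range (n + 1), k.choose j * a ^ j * b ^ (k - j) * t ^ j := by
    intro k hk
    rw [add_pow]
    refine sum_subset (range_subset_range.2 (mem_range.1 hk)) (fun j _ hj => ?_) |>.trans
      (sum_congr rfl fun j _ => by ring)
    rw [Nat.choose_eq_zero_of_lt (by simpa using hj)]
    simp
  rw [sum_congr rfl fun k hk => congrArg (c k * ·) (hexpand k hk)]
  simp only [compAffineCoeff, mul_sum, sum_mul]
  rw [sum_comm]
  exact sum_congr rfl fun j _ => sum_congr rfl fun k _ => by ring

theorem stmt_13_general (n : ℕ) (m : ℝ) (c : ℕ → ℝ) (hc : ∀ k, 0 ≤ c k) :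
    ∃ c₁ c₂ : ℕ → ℝ, (∀ k, 0 ≤ c₁ k) ∧ (∀ k, 0 ≤ c₂ k) ∧
      ∀ x y : ℝ, 0 ≤ x → 0 ≤ y →
        (∑ k ∈ Finset.range (n + 1),
            c k * (logm m (Real.sqrt (x ^ 2 + y ^ 2))) ^ k) ≤
          (∑ k ∈ Finset.range (n + 1), c₁ k * (logm m y) ^ k) +
          (∑ k ∈ Finset.range (n + 1), c₂ k * (logm m x) ^ k) := by
  have hlog2 : 0 ≤ log 2 := log_nonneg one_le_two
  have hcoeff := compAffineCoeff_nonneg hc n zero_le_two hlog2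
  refine ⟨_, _, hcoeff, hcoeff, fun x y hx hy => ?_⟩
  rw [← sum_mul_affine_pow, ← sum_mul_affine_pow]
  have hP : ∀ t, 0 ≤ t → 0 ≤ ∑ k ∈ range (n + 1), c k * (2 * t + log 2) ^ k :=
    fun t ht => sum_nonneg fun k _ => by have := hc k; positivity
  set A := logm m x
  set B := logm m y
  have hmax : logm m √(x ^ 2 + y ^ 2) ≤ 2 * max A B + log 2 := by
    linarith [logm_sqrt_sq_add_sq_le m hx hy, le_max_left A B, le_max_right A B]
  calc _ ≤ ∑ k ∈ range (n + 1), c k * (2 * max A B + log 2) ^ k :=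
        sum_mul_pow_le_sum_mul_pow _ c id hc (logm_nonneg _ _) hmax
    _ ≤ _ := by
      rcases max_choice A B with h | h <;> rw [h] <;>
        linarith [hP A (logm_nonneg m x), hP B (logm_nonneg m y)]

theorem stmt_13 (n : ℕ) (m : ℝ) (hm : 0 ≤ m) (c : ℕ → ℝ) (hc : ∀ k, 0 ≤ c k) :
    ∃ c₁ c₂ : ℕ → ℝ, (∀ k, 0 ≤ c₁ k) ∧ (∀ k, 0 ≤ c₂ k) ∧
      ∀ x y : ℝ, 0 ≤ x → 0 ≤ y →
        (∑ k ∈ Finset.range (n + 1),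
            c k * (logm m (Real.sqrt (x ^ 2 + y ^ 2))) ^ k) ≤
          (∑ k ∈ Finset.range (n + 1), c₁ k * (logm m y) ^ k) +
          (∑ k ∈ Finset.range (n + 1), c₂ k * (logm m x) ^ k) :=
  stmt_13_general n m c hc
end

section
/- Let 0 ≤ β ≤ 1 and define f(x) := (e^{−βx} − e^{−x})/x for x > 0 (extended continuously at 0 by 1−β). Then for every natural number w and all x ≥ 0, |f^{(w)}(x)| < e · w! / (1+x)^{w+1}. -/
/-!
Since `f x = ∫ γ in β..1, exp (-γ * x)`, differentiating under the integral sign gives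
`f⁽ʷ⁾ x = ∫ γ in β..1, (-γ) ^ w * exp (-γ * x)`. For `0 ≤ γ ≤ 1` we have
`exp (-γ * x) ≤ e * exp (-(1 + x) * γ)`, so `|f⁽ʷ⁾ x|` is at most `e` times the truncated
Gamma integral `∫ γ in 0..1, γ ^ w * exp (-(1 + x) * γ)`, which is strictly smaller than the
full integral `w! / (1 + x) ^ (w + 1)`.
-/

open MeasureTheory Set Real Metric
open scoped Nat

theorem intervalIntegral_exp_neg_mul (a b : ℝ) {t : ℝ} (ht : t ≠ 0) :
    ∫ γ in a..b, exp (-γ * t) = (exp (-a * t) - exp (-b * t)) / t := by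
  have key := intervalIntegral.integral_comp_mul_right (a := a) (b := b) exp (neg_ne_zero.2 ht)
  simp only [mul_neg, ← neg_mul, integral_exp, smul_eq_mul] at key
  rw [key]
  field_simp
  ring

theorem hasDerivAt_intervalIntegral_of_continuous {E : Type*} [NormedAddCommGroup E]
    [NormedSpace ℝ E] {F F' : ℝ → ℝ → E} (a b x : ℝ) (hF : ∀ y, Continuous (F y))
    (hF' : Continuous (Function.uncurry F'))
    (hderiv : ∀ y t, HasDerivAt (F · t) (F' y t) y) :
    HasDerivAt (fun y => ∫ t in a..b, F y t) (∫ t in a..b, F' x t) x := by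
  obtain ⟨C, hC⟩ := (isCompact_closedBall x 1 |>.prod isCompact_uIcc).exists_bound_of_continuousOn
    (hF'.continuousOn (s := closedBall x 1 ×ˢ uIcc a b))
  have hF'x : Continuous (F' x) := hF'.comp (Continuous.prodMk_right x)
  refine (intervalIntegral.hasDerivAt_integral_of_dominated_loc_of_deriv_le (bound := fun _ => C)
    (ball_mem_nhds x one_pos) (.of_forall fun y => (hF y).aestronglyMeasurable)
    ((hF x).intervalIntegrable a b) hF'x.aestronglyMeasurable ?_ intervalIntegrable_const
    (.of_forall fun t _ y _ => hderiv y t)).2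
  exact .of_forall fun t ht y hy =>
    hC (y, t) ⟨ball_subset_closedBall hy, uIoc_subset_uIcc ht⟩

theorem iteratedDeriv_intervalIntegral_exp_neg_mul (a b : ℝ) (n : ℕ) :
    iteratedDeriv n (fun x => ∫ γ in a..b, exp (-γ * x)) =
      fun x => ∫ γ in a..b, (-γ) ^ n * exp (-γ * x) := by
  induction n with
  | zero => simp
  | succ n ih =>
    ext x
    rw [iteratedDeriv_succ, ih]
    refine (hasDerivAt_intervalIntegral_of_continuous (F := fun y γ => (-γ) ^ n * exp (-γ * y))
      (F' := fun y γ => (-γ) ^ (n + 1) * exp (-γ * y)) a b x (by fun_prop) (by fun_prop)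
      fun y γ => ?_).deriv
    exact (((hasDerivAt_id' y).const_mul (-γ)).exp.const_mul ((-γ) ^ n)).congr_deriv (by ring)

theorem integral_pow_mul_exp_neg_mul_Ioi (n : ℕ) {c : ℝ} (hc : 0 < c) :
    ∫ γ in Ioi 0, γ ^ n * exp (-(c * γ)) = (n ! : ℝ) / c ^ (n + 1) := by
  have h := integral_rpow_mul_exp_neg_mul_Ioi (a := n + 1) (by positivity) hc
  simp only [add_sub_cancel_right, rpow_natCast, Gamma_nat_eq_factorial] at h
  rw [h, ← rpow_natCast, Nat.cast_add_one, div_rpow zero_le_one hc.le, one_rpow,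
    one_div_mul_eq_div]

theorem integrableOn_pow_mul_exp_neg_mul_Ioi (n : ℕ) {c : ℝ} (hc : 0 < c) :
    IntegrableOn (fun γ => γ ^ n * exp (-(c * γ))) (Ioi 0) := by
  simpa using integrableOn_rpow_mul_exp_neg_mul_rpow (s := n) (p := 1)
    (neg_one_lt_zero.trans_le n.cast_nonneg) one_pos hc

theorem intervalIntegral_pow_mul_exp_neg_mul_lt (n : ℕ) {c : ℝ} (hc : 0 < c) :
    ∫ γ in (0 : ℝ)..1, γ ^ n * exp (-(c * γ)) < (n ! : ℝ) / c ^ (n + 1) := by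
  have hint := integrableOn_pow_mul_exp_neg_mul_Ioi n hc
  have hint₁ := hint.mono_set (Ioi_subset_Ioi zero_le_one)
  have htail : 0 < ∫ γ in Ioi 1, γ ^ n * exp (-(c * γ)) := by
    have hpos : ∀ γ ∈ Ioi (1 : ℝ), 0 < γ ^ n * exp (-(c * γ)) := fun γ hγ =>
      mul_pos (pow_pos (zero_lt_one.trans hγ) n) (exp_pos _)
    rw [setIntegral_pos_iff_support_of_nonneg_ae
      (ae_restrict_of_forall_mem measurableSet_Ioi fun γ hγ => (hpos γ hγ).le) hint₁,
      inter_eq_right.2 fun γ hγ => Function.mem_support.2 (hpos γ hγ).ne', volume_Ioi]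
    exact ENNReal.zero_lt_top
  rw [← integral_pow_mul_exp_neg_mul_Ioi n hc,
    ← intervalIntegral.integral_interval_add_Ioi hint hint₁]
  exact lt_add_of_pos_right _ htail

theorem abs_intervalIntegral_neg_pow_mul_exp_neg_mul_lt {a b : ℝ} (ha : 0 ≤ a) (hab : a ≤ b)
    (hb : b ≤ 1) (n : ℕ) {x : ℝ} (hx : 0 ≤ x) :
    |∫ γ in a..b, (-γ) ^ n * exp (-γ * x)| < exp 1 * n ! / (1 + x) ^ (n + 1) := by
  have hx₁ : 0 < 1 + x := by linarith
  have hle : ∀ γ ∈ Icc a b, |(-γ) ^ n * exp (-γ * x)| ≤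
      exp 1 * (γ ^ n * exp (-((1 + x) * γ))) := fun γ hγ => by
    have hγ₀ : 0 ≤ γ := ha.trans hγ.1
    have hγ₁ : γ ≤ 1 := hγ.2.trans hb
    rw [abs_mul, abs_pow, abs_neg, abs_of_nonneg hγ₀, abs_of_pos (exp_pos _), mul_left_comm,
      ← exp_add]
    gcongr
    nlinarith
  calc |∫ γ in a..b, (-γ) ^ n * exp (-γ * x)|
      ≤ ∫ γ in a..b, |(-γ) ^ n * exp (-γ * x)| := intervalIntegral.abs_integral_le_integral_abs hab
    _ ≤ ∫ γ in a..b, exp 1 * (γ ^ n * exp (-((1 + x) * γ))) :=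
        intervalIntegral.integral_mono_on hab (Continuous.intervalIntegrable (by fun_prop) _ _)
          (Continuous.intervalIntegrable (by fun_prop) _ _) hle
    _ ≤ ∫ γ in (0 : ℝ)..1, exp 1 * (γ ^ n * exp (-((1 + x) * γ))) :=
        intervalIntegral.integral_mono_interval ha hab hb
          (ae_restrict_of_forall_mem measurableSet_Ioc fun γ hγ => by
            have := hγ.1.le
            positivity)
          (Continuous.intervalIntegrable (by fun_prop) _ _)
    _ = exp 1 * ∫ γ in (0 : ℝ)..1, γ ^ n * exp (-((1 + x) * γ)) :=
        intervalIntegral.integral_const_mul _ _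
    _ < exp 1 * (n ! / (1 + x) ^ (n + 1)) :=
        mul_lt_mul_of_pos_left (intervalIntegral_pow_mul_exp_neg_mul_lt n hx₁) (exp_pos 1)
    _ = exp 1 * n ! / (1 + x) ^ (n + 1) := (mul_div_assoc _ _ _).symm

theorem stmt_15 (β : ℝ) (hβ0 : 0 ≤ β) (hβ1 : β ≤ 1) (w : ℕ) (x : ℝ) (hx : 0 ≤ x) :
    |iteratedDeriv w
        (fun t : ℝ => if t = 0 then 1 - β else (Real.exp (-β * t) - Real.exp (-t)) / t) x| <
      Real.exp 1 * (w.factorial : ℝ) / (1 + x) ^ (w + 1) := by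
  have hf : (fun t : ℝ => if t = 0 then 1 - β else (exp (-β * t) - exp (-t)) / t) =
      fun t => ∫ γ in β..1, exp (-γ * t) := by
    funext t
    split_ifs with ht
    · simp [ht]
    · rw [intervalIntegral_exp_neg_mul β 1 ht, neg_one_mul]
  rw [hf, iteratedDeriv_intervalIntegral_exp_neg_mul]
  exact abs_intervalIntegral_neg_pow_mul_exp_neg_mul_lt hβ0 hβ1 le_rfl w hx
end

section
/- Fix s ∈ ℕ. There exists a constant c such that for all natural numbers u ≤ w_max and all x ∈ ℝ⁴: if u ≤ s, then every u-th order partial derivative of the tensor-valued function x ↦ x^{⊗s}(1 − e^{−|x|⁴}) is bounded in norm by c·|x|^{s+1−u}, while if u > s it is bounded by the constant c. -/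
/-!
Write the function as `g • T` with `g x = 1 - exp (-‖x‖ ^ 4)` and `T x = x^{⊗s}`, the diagonal of
an `s`-linear map, and expand `D^u (g • T)` by the Leibniz rule. The derivatives of `T` satisfy
`‖D^j T x‖ ≲ ‖x‖ ^ (s - j)` and vanish for `j > s`. In the term without derivatives on `g`, the
bound `|g x| ≤ ‖x‖` supplies the extra power of `‖x‖`. In the other terms the derivatives of `g`
are those of `exp (-‖x‖ ^ 4)`, which by Faà di Bruno decay faster than any power of `1 + ‖x‖` and
so absorb the polynomial growth of `D^{u-m} T`.
-/

open Real Asymptotics Nat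
open scoped ContDiff

namespace ContinuousMultilinearMap

variable {𝕜 ι E F : Type*} [NontriviallyNormedField 𝕜] [Fintype ι]
  [NormedAddCommGroup E] [NormedSpace 𝕜 E] [NormedAddCommGroup F] [NormedSpace 𝕜 F]

theorem norm_iteratedFDeriv_comp_diagonal_le (f : ContinuousMultilinearMap 𝕜 (fun _ : ι ↦ E) F)
    (n : ℕ) (x : E) :
    ‖iteratedFDeriv 𝕜 n (fun x ↦ f fun _ ↦ x) x‖ ≤
      (Fintype.card ι).descFactorial n * ‖f‖ * ‖x‖ ^ (Fintype.card ι - n) := by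
  let diag : E →L[𝕜] ι → E := ContinuousLinearMap.pi fun _ ↦ ContinuousLinearMap.id 𝕜 E
  have hdiag : ‖diag‖ ≤ 1 :=
    ContinuousLinearMap.opNorm_le_bound _ zero_le_one fun v ↦ by
      simpa [diag] using pi_norm_le_iff_of_nonneg (norm_nonneg v) |>.2 fun _ ↦ le_rfl
  have hdiag_x : ‖diag x‖ ≤ ‖x‖ := by simpa using diag.le_of_opNorm_le hdiag x
  change ‖iteratedFDeriv 𝕜 n (f ∘ diag) x‖ ≤ _
  rw [diag.iteratedFDeriv_comp_right f.contDiff x le_top]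
  calc ‖(iteratedFDeriv 𝕜 n f (diag x)).compContinuousLinearMap fun _ ↦ diag‖
      ≤ ‖iteratedFDeriv 𝕜 n f (diag x)‖ * ∏ _ : Fin n, ‖diag‖ :=
        norm_compContinuousLinearMap_le _ _
    _ ≤ (Fintype.card ι).descFactorial n * ‖f‖ * ‖diag x‖ ^ (Fintype.card ι - n) * 1 := by
        gcongr
        · exact f.norm_iteratedFDeriv_le n (diag x)
        · exact Finset.prod_le_one (fun _ _ ↦ norm_nonneg _) fun _ _ ↦ hdiag
    _ ≤ (Fintype.card ι).descFactorial n * ‖f‖ * ‖x‖ ^ (Fintype.card ι - n) := by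
        rw [mul_one]
        gcongr

end ContinuousMultilinearMap

theorem iteratedFDeriv_const_sub_apply {𝕜 E F : Type*} [NontriviallyNormedField 𝕜]
    [NormedAddCommGroup E] [NormedSpace 𝕜 E] [NormedAddCommGroup F] [NormedSpace 𝕜 F]
    {n : ℕ} (hn : n ≠ 0) (c : F) {f : E → F} {x : E} (hf : ContDiffAt 𝕜 n f x) :
    iteratedFDeriv 𝕜 n (fun y ↦ c - f y) x = -iteratedFDeriv 𝕜 n f x := by
  rw [fun_iteratedFDeriv_sub_apply contDiffAt_const hf, iteratedFDeriv_const_of_ne hn,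
    Pi.zero_apply, zero_sub]

theorem Real.norm_iteratedFDeriv_exp (n : ℕ) (t : ℝ) : ‖iteratedFDeriv ℝ n exp t‖ = exp t := by
  rw [norm_iteratedFDeriv_eq_norm_iteratedDeriv, iteratedDeriv_eq_iterate, iter_deriv_exp,
    norm_of_nonneg (exp_pos t).le]

theorem one_add_pow_mul_exp_neg_pow_four_le (N : ℕ) {t : ℝ} (ht : 0 ≤ t) :
    (1 + t) ^ N * exp (-t ^ 4) ≤ 2 ^ N * N ! := by
  have hfac : (1 : ℝ) ≤ N ! := mod_cast N.factorial_pos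
  rcases le_total t 1 with h1 | h1
  · have hexp : exp (-t ^ 4) ≤ 1 := exp_le_one_iff.2 (by simp only [neg_nonpos]; positivity)
    calc (1 + t) ^ N * exp (-t ^ 4) ≤ 2 ^ N * 1 := by gcongr; linarith
      _ ≤ 2 ^ N * N ! := by gcongr
  · have hpow : (t ^ 4) ^ N ≤ N ! * exp (t ^ 4) := by
      have := pow_div_factorial_le_exp (t ^ 4) (by positivity) N
      rwa [div_le_iff₀ (by positivity), mul_comm] at this
    calc (1 + t) ^ N * exp (-t ^ 4) ≤ (2 * t) ^ N * exp (-t ^ 4) := by gcongr; linarith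
      _ ≤ 2 ^ N * ((t ^ 4) ^ N * exp (-t ^ 4)) := by
        rw [mul_pow, mul_assoc, ← pow_mul]
        gcongr
        omega
      _ ≤ 2 ^ N * (N ! * exp (t ^ 4) * exp (-t ^ 4)) := by gcongr
      _ = 2 ^ N * N ! := by rw [mul_assoc, ← exp_add, add_neg_cancel, exp_zero, mul_one]

theorem abs_one_sub_exp_neg_pow_four_le {t : ℝ} (ht : 0 ≤ t) : |1 - exp (-t ^ 4)| ≤ t := by
  have hexp : exp (-t ^ 4) ≤ 1 := exp_le_one_iff.2 (by simp only [neg_nonpos]; positivity)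
  have hlin : 1 - t ^ 4 ≤ exp (-t ^ 4) := by linarith [add_one_le_exp (-t ^ 4)]
  rw [abs_of_nonneg (by linarith)]
  rcases le_total t 1 with h1 | h1
  · nlinarith [pow_le_pow_of_le_one ht h1 (show 1 ≤ 4 by norm_num), pow_one t]
  · linarith [exp_pos (-t ^ 4)]

theorem pow_sub_sub_le_ite_mul_one_add_pow {t : ℝ} (ht : 0 ≤ t) {s u m : ℕ} (hm : 1 ≤ m)
    (hmu : m ≤ u) :
    t ^ (s - (u - m)) ≤ (if u ≤ s then t ^ (s + 1 - u) else 1) * (1 + t) ^ s := by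
  have ht1 : 1 ≤ 1 + t := by linarith
  split_ifs with hus
  · calc t ^ (s - (u - m)) = t ^ (s + 1 - u) * t ^ (m - 1) := by
          rw [← pow_add]
          congr 1
          omega
      _ ≤ t ^ (s + 1 - u) * (1 + t) ^ s := by
        gcongr
        exact (pow_le_pow_left₀ ht (by linarith) _).trans (pow_le_pow_right₀ ht1 (by omega))
  · calc t ^ (s - (u - m)) ≤ (1 + t) ^ (s - (u - m)) := pow_le_pow_left₀ ht (by linarith) _
      _ ≤ 1 * (1 + t) ^ s := by rw [one_mul]; exact pow_le_pow_right₀ ht1 (by omega)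

theorem exists_pos_forall_le_mul_of_isBigO_top {α : Type*} {E : ℕ → Type*} [∀ u, Norm (E u)]
    {f : (u : ℕ) → α → E u} {w : ℕ → α → ℝ} (hw : ∀ u x, 0 ≤ w u x)
    (h : ∀ u, f u =O[⊤] w u) (N : ℕ) :
    ∃ c, 0 < c ∧ ∀ u ≤ N, ∀ x, ‖f u x‖ ≤ c * w u x := by
  choose c hc using fun u ↦ isBigO_top.1 (h u)
  refine ⟨1 + ∑ u ∈ Finset.range (N + 1), |c u|, by positivity, fun u hu x ↦ ?_⟩
  have hcu : c u ≤ 1 + ∑ u ∈ Finset.range (N + 1), |c u| :=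
    (le_abs_self _).trans <| (Finset.single_le_sum (f := fun u ↦ |c u|)
      (fun _ _ ↦ abs_nonneg _) (Finset.mem_range.2 (by omega))).trans
        (le_add_of_nonneg_left zero_le_one)
  calc ‖f u x‖ ≤ c u * ‖w u x‖ := hc u x
    _ = c u * w u x := by rw [norm_of_nonneg (hw u x)]
    _ ≤ _ := by gcongr; exact hw u x

section InnerProductSpace

variable {H G : Type*} [NormedAddCommGroup H] [InnerProductSpace ℝ H] [NormedAddCommGroup G]
  [NormedSpace ℝ G]

theorem hasTemperateGrowth_neg_norm_pow_four :
    (fun x : H ↦ -‖x‖ ^ 4).HasTemperateGrowth := by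
  simpa only [Pi.neg_def, Pi.pow_apply, ← pow_mul] using
    ((Function.hasTemperateGrowth_norm_sq (H := H)).pow 2).neg

theorem exists_one_add_norm_pow_mul_norm_iteratedFDeriv_exp_neg_norm_pow_four_le (n K : ℕ) :
    ∃ C, ∀ x : H, (1 + ‖x‖) ^ K * ‖iteratedFDeriv ℝ n (fun x ↦ exp (-‖x‖ ^ 4)) x‖ ≤ C := by
  obtain ⟨k, C, hC, hbound⟩ :=
    (hasTemperateGrowth_neg_norm_pow_four (H := H)).norm_iteratedFDeriv_le_uniform n
  refine ⟨n ! * (C + 1) ^ n * (2 ^ (K + k * n) * (K + k * n) !), fun x ↦ ?_⟩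
  -- Faà di Bruno needs `‖D^i (-‖·‖ ^ 4) x‖ ≤ D ^ i` for `1 ≤ i ≤ n`; as `1 ≤ D`, `≤ D` suffices.
  set D := (C + 1) * (1 + ‖x‖) ^ k
  have hx : 1 ≤ 1 + ‖x‖ := by linarith [norm_nonneg x]
  have hD : 1 ≤ D := one_le_mul_of_one_le_of_one_le (by linarith) (one_le_pow₀ hx)
  have hfaa := norm_iteratedFDeriv_comp_le contDiff_exp hasTemperateGrowth_neg_norm_pow_four.1
    (mod_cast le_top) x (fun i _ ↦ (norm_iteratedFDeriv_exp i _).le)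
    (D := D) fun i hi hin ↦ (hbound i hin x).trans <|
      (mul_le_mul_of_nonneg_right (by linarith) (by positivity)).trans (le_self_pow₀ hD (by omega))
  calc (1 + ‖x‖) ^ K * ‖iteratedFDeriv ℝ n (fun x ↦ exp (-‖x‖ ^ 4)) x‖
      ≤ (1 + ‖x‖) ^ K * (n ! * exp (-‖x‖ ^ 4) * D ^ n) := by gcongr; exact hfaa
    _ = n ! * (C + 1) ^ n * ((1 + ‖x‖) ^ (K + k * n) * exp (-‖x‖ ^ 4)) := by
      rw [mul_pow, ← pow_mul, pow_add]
      ring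
    _ ≤ _ := mul_le_mul_of_nonneg_left
      (one_add_pow_mul_exp_neg_pow_four_le _ (norm_nonneg x)) (by positivity)

theorem isBigO_iteratedFDeriv_one_sub_exp_neg_norm_pow_four_smul_diagonal {s : ℕ}
    (f : ContinuousMultilinearMap ℝ (fun _ : Fin s ↦ H) G) (u : ℕ) :
    iteratedFDeriv ℝ u (fun x ↦ (1 - exp (-‖x‖ ^ 4)) • f fun _ ↦ x) =O[⊤]
      fun x ↦ if u ≤ s then ‖x‖ ^ (s + 1 - u) else 1 := by
  set w : H → ℝ := fun x ↦ if u ≤ s then ‖x‖ ^ (s + 1 - u) else 1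
  have hw (x : H) : 0 ≤ w x := by simp only [w]; split_ifs <;> positivity
  have hh : ContDiff ℝ ∞ fun x : H ↦ exp (-‖x‖ ^ 4) :=
    contDiff_exp.comp hasTemperateGrowth_neg_norm_pow_four.1
  have hg : ContDiff ℝ ∞ fun x : H ↦ 1 - exp (-‖x‖ ^ 4) := contDiff_const.sub hh
  have hT (j : ℕ) (x : H) : ‖iteratedFDeriv ℝ j (fun x ↦ f fun _ ↦ x) x‖ ≤
      s.descFactorial j * ‖f‖ * ‖x‖ ^ (s - j) := by
    simpa using f.norm_iteratedFDeriv_comp_diagonal_le j x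
  have hterm : ∀ m ∈ Finset.range (u + 1), (fun x ↦ (u.choose m : ℝ) *
      ‖iteratedFDeriv ℝ m (fun x ↦ 1 - exp (-‖x‖ ^ 4)) x‖ *
      ‖iteratedFDeriv ℝ (u - m) (fun x ↦ f fun _ ↦ x) x‖) =O[⊤] w := by
    intro m hmu
    rcases Nat.eq_zero_or_pos m with rfl | hm
    · refine isBigO_of_le' (c := s.descFactorial u * ‖f‖) ⊤ fun x ↦ ?_
      have hgx : ‖1 - exp (-‖x‖ ^ 4)‖ ≤ ‖x‖ := abs_one_sub_exp_neg_pow_four_le (norm_nonneg x)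
      rw [norm_of_nonneg (by positivity), norm_of_nonneg (hw x), choose_zero_right, cast_one,
        one_mul, Nat.sub_zero, norm_iteratedFDeriv_zero]
      calc _ ≤ ‖x‖ * (s.descFactorial u * ‖f‖ * ‖x‖ ^ (s - u)) :=
            mul_le_mul hgx (hT u x) (norm_nonneg _) (norm_nonneg _)
        _ = s.descFactorial u * ‖f‖ * (‖x‖ * ‖x‖ ^ (s - u)) := by ring
        _ ≤ s.descFactorial u * ‖f‖ * w x := by
          simp only [w]
          split_ifs with hus
          · rw [← pow_succ' ‖x‖, show s - u + 1 = s + 1 - u by omega]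
          · simp [descFactorial_eq_zero_iff_lt.2 (not_le.1 hus)]
    · obtain ⟨C, hC⟩ :=
        exists_one_add_norm_pow_mul_norm_iteratedFDeriv_exp_neg_norm_pow_four_le (H := H) m s
      refine isBigO_of_le' (c := u.choose m * s.descFactorial (u - m) * ‖f‖ * C) ⊤ fun x ↦ ?_
      rw [norm_of_nonneg (by positivity), norm_of_nonneg (hw x),
        iteratedFDeriv_const_sub_apply hm.ne' _ (hh.contDiffAt.of_le (mod_cast le_top)), norm_neg]
      have hpow := pow_sub_sub_le_ite_mul_one_add_pow (norm_nonneg x) (s := s) hm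
        (Finset.mem_range_succ_iff.1 hmu)
      calc _ ≤ u.choose m * ‖iteratedFDeriv ℝ m (fun x ↦ exp (-‖x‖ ^ 4)) x‖ *
            (s.descFactorial (u - m) * ‖f‖ * (w x * (1 + ‖x‖) ^ s)) := by
            gcongr
            exact (hT _ x).trans (mul_le_mul_of_nonneg_left hpow (by positivity))
        _ = u.choose m * s.descFactorial (u - m) * ‖f‖ *
            ((1 + ‖x‖) ^ s * ‖iteratedFDeriv ℝ m (fun x ↦ exp (-‖x‖ ^ 4)) x‖) * w x := by ring
        _ ≤ _ := by gcongr; exact hC x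
  refine (isBigO_of_le' (c := 1) ⊤ fun x ↦ ?_).trans (IsBigO.fun_sum hterm)
  rw [one_mul, norm_of_nonneg (Finset.sum_nonneg fun _ _ ↦ by positivity)]
  exact norm_iteratedFDeriv_smul_le hg (f.contDiff.comp (contDiff_pi.2 fun _ ↦ contDiff_id)) x
    (mod_cast le_top)

end InnerProductSpace

section TensorPower

variable (ι κ : Type*) [Fintype ι]

noncomputable def euclideanTensorPower :
    ContinuousMultilinearMap ℝ (fun _ : ι ↦ EuclideanSpace ℝ κ) (EuclideanSpace ℝ (ι → κ)) :=
  (EuclideanSpace.equiv (ι → κ) ℝ).symm.toContinuousLinearMap.compContinuousMultilinearMap <|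
    ContinuousMultilinearMap.pi fun μ ↦
      (ContinuousMultilinearMap.mkPiAlgebra ℝ ι ℝ).compContinuousLinearMap
        fun i ↦ EuclideanSpace.proj (μ i)

variable {ι κ}

@[simp]
theorem euclideanTensorPower_apply (v : ι → EuclideanSpace ℝ κ) (μ : ι → κ) :
    euclideanTensorPower ι κ v μ = ∏ i, v i (μ i) := by
  simp [euclideanTensorPower]

end TensorPower

theorem stmt_16_general (s wmax : ℕ) :
    ∃ c : ℝ, 0 < c ∧ ∀ u : ℕ, u ≤ wmax → ∀ x : EuclideanSpace ℝ (Fin 4),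
      ‖iteratedFDeriv ℝ u
          (fun x : EuclideanSpace ℝ (Fin 4) =>
            (show EuclideanSpace ℝ (Fin s → Fin 4) from
              WithLp.toLp 2 (fun μ : Fin s → Fin 4 => (∏ i, x (μ i)) * (1 - Real.exp (-‖x‖ ^ 4))))) x‖ ≤
        c * (if u ≤ s then ‖x‖ ^ (s + 1 - u) else 1) := by
  have hF : (fun x : EuclideanSpace ℝ (Fin 4) ↦
      (show EuclideanSpace ℝ (Fin s → Fin 4) from
        WithLp.toLp 2 fun μ : Fin s → Fin 4 ↦ (∏ i, x (μ i)) * (1 - exp (-‖x‖ ^ 4)))) =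
      fun x ↦ (1 - exp (-‖x‖ ^ 4)) • euclideanTensorPower (Fin s) (Fin 4) fun _ ↦ x := by
    funext x
    ext μ
    simp [mul_comm]
  rw [hF]
  refine exists_pos_forall_le_mul_of_isBigO_top (fun u x ↦ ?_)
    (isBigO_iteratedFDeriv_one_sub_exp_neg_norm_pow_four_smul_diagonal
      (euclideanTensorPower (Fin s) (Fin 4))) wmax
  split_ifs <;> positivity

theorem stmt_16 (s wmax : ℕ) (hwmax : 4 ≤ wmax) :
    ∃ c : ℝ, 0 < c ∧ ∀ u : ℕ, u ≤ wmax → ∀ x : EuclideanSpace ℝ (Fin 4),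
      ‖iteratedFDeriv ℝ u
          (fun x : EuclideanSpace ℝ (Fin 4) =>
            (show EuclideanSpace ℝ (Fin s → Fin 4) from
              WithLp.toLp 2 (fun μ : Fin s → Fin 4 => (∏ i, x (μ i)) * (1 - Real.exp (-‖x‖ ^ 4))))) x‖ ≤
        c * (if u ≤ s then ‖x‖ ^ (s + 1 - u) else 1) :=
  stmt_16_general s wmax
end

section
/- Let f : [0,∞) → ℝ be differentiable (as a function of p²) and consider F(p) := f(p²) on ℝ⁴. Then for every w ∈ ℕ and every choice of indices μ₁,...,μ_w, the w-th partial derivative satisfies |∂_{p_{μ₁}}···∂_{p_{μ_w}} f(p²)| ≤ 2^w Σ_{k=0}^{⌊w/2⌋} (w!/((w−2k)! k!)) |p|^{w−2k} |f^{(w−k)}(p²)|, where f^{(j)} denotes the j-th derivative of f with respect to its argument. -/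
/-!
Write `F x = (∏ i, ℓ i x) * g (‖x‖ ^ 2)` with `d` linear forms `ℓ i` of norm at most one. The
derivative of `F` along a vector `v` with `‖v‖ ≤ 1` is a sum of `d` functions of the same kind with
one linear factor dropped (coefficient `ℓ i v`, of modulus at most one), plus twice the one with the
factor `⟪v, ·⟫` added and `g` replaced by `g'`. Hence, by induction on the order `n`, the `n`-th
derivative is bounded by `∑ k, c n d k * ‖x‖ ^ (d + n - 2k) * |g^(n-k) (‖x‖ ^ 2)|`, `k` counting
the dropped factors, provided `2 c(n, d+1, k+1) + d c(n, d-1, k) ≤ c(n+1, d, k+1)`. The choice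
`c(n, d, k) = 2ⁿ (n choose k) (n+d-k)! / (n+d-2k)!` satisfies this, and for `d = 0` it is the
coefficient `2ⁿ n! / ((n-2k)! k!)` of the theorem.
-/

open Finset

theorem iteratedFDeriv_succ_apply_eq_iteratedFDeriv_fderiv_apply
    {𝕜 E F : Type*} [NontriviallyNormedField 𝕜] [NormedAddCommGroup E] [NormedSpace 𝕜 E]
    [NormedAddCommGroup F] [NormedSpace 𝕜 F] {f : E → F} {n : ℕ} (hf : ContDiff 𝕜 (n + 1) f)
    (x : E) (m : Fin (n + 1) → E) :
    iteratedFDeriv 𝕜 (n + 1) f x m =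
      iteratedFDeriv 𝕜 n (fun y => fderiv 𝕜 f y (m (Fin.last n))) x (Fin.init m) := by
  have hf' : ContDiff 𝕜 n (fderiv 𝕜 f) := hf.fderiv_right le_rfl
  have h := (ContinuousLinearMap.apply 𝕜 F (m (Fin.last n))).iteratedFDeriv_comp_left
    hf'.contDiffAt (x := x) le_rfl
  rw [iteratedFDeriv_succ_apply_right]
  exact (congrArg (· (Fin.init m)) h).symm

theorem Fin.prod_univ_erase_eq_prod_succAbove {M : Type*} [CommMonoid M] {n : ℕ}
    (f : Fin (n + 1) → M) (i : Fin (n + 1)) :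
    ∏ j ∈ univ.erase i, f j = ∏ j, f (i.succAbove j) := by
  rw [← compl_singleton, ← Fin.image_succAbove_univ,
    prod_image Fin.succAbove_right_injective.injOn]

def radialDerivCoeff (n d k : ℕ) : ℕ := 2 ^ n * n.choose k * (n + d - k).descFactorial k

theorem radialDerivCoeff_succ_zero (n d : ℕ) :
    radialDerivCoeff (n + 1) d 0 = 2 * radialDerivCoeff n (d + 1) 0 := by
  simp [radialDerivCoeff, pow_succ, mul_comm]

theorem succ_mul_descFactorial_le (a b k : ℕ) :
    (b + 1) * (a + b - k).descFactorial k ≤ 2 * (a + b + 1 - k).descFactorial (k + 1) := by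
  rcases Nat.lt_or_ge (a + b - k) k with hlt | hle
  · simp [Nat.descFactorial_eq_zero_iff_lt.mpr hlt]
  · rw [show a + b + 1 - k = a + b - k + 1 by omega, Nat.succ_descFactorial_succ, ← mul_assoc]
    exact Nat.mul_le_mul_right _ (by omega)

theorem radialDerivCoeff_succ_succ_le (n d k : ℕ) :
    2 * radialDerivCoeff n (d + 1) (k + 1) + d * radialDerivCoeff n (d - 1) k ≤
      radialDerivCoeff (n + 1) d (k + 1) := by
  simp only [radialDerivCoeff, Nat.choose_succ_succ', pow_succ]
  rcases d with _ | d
  · simp only [zero_mul, add_zero, Nat.add_sub_add_right]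
    nlinarith [Nat.zero_le (2 ^ n * n.choose k * (n - k).descFactorial (k + 1))]
  · have h := Nat.mul_le_mul_left (2 ^ n * n.choose k) (succ_mul_descFactorial_le n d k)
    rw [show n + (d + 1 + 1) - (k + 1) = n + d + 1 - k by omega,
      show n + 1 + (d + 1) - (k + 1) = n + d + 1 - k by omega, Nat.add_sub_cancel]
    nlinarith [h]

noncomputable def radialDerivTerm (n d : ℕ) (g : ℝ → ℝ) (r : ℝ) (k : ℕ) : ℝ :=
  radialDerivCoeff n d k * r ^ (d + n - 2 * k) * |iteratedDeriv (n - k) g (r ^ 2)|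

noncomputable def radialDerivBound (n d : ℕ) (g : ℝ → ℝ) (r : ℝ) : ℝ :=
  ∑ k ∈ range (n + 1), radialDerivTerm n d g r k

theorem radialDerivTerm_nonneg (n d : ℕ) (g : ℝ → ℝ) {r : ℝ} (hr : 0 ≤ r) (k : ℕ) :
    0 ≤ radialDerivTerm n d g r k := by
  unfold radialDerivTerm
  positivity

theorem two_mul_radialDerivTerm_deriv_zero (n d : ℕ) (g : ℝ → ℝ) (r : ℝ) :
    2 * radialDerivTerm n (d + 1) (deriv g) r 0 = radialDerivTerm (n + 1) d g r 0 := by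
  simp only [radialDerivTerm, radialDerivCoeff_succ_zero, ← iteratedDeriv_succ', Nat.sub_zero]
  push_cast
  ring_nf

theorem two_mul_radialDerivTerm_deriv_succ_add_le {n k : ℕ} (hk : k ≤ n) (d : ℕ) (g : ℝ → ℝ)
    {r : ℝ} (hr : 0 ≤ r) :
    2 * radialDerivTerm n (d + 1) (deriv g) r (k + 1) + d * radialDerivTerm n (d - 1) g r k ≤
      radialDerivTerm (n + 1) d g r (k + 1) := by
  set a := r ^ (d + n - 1 - 2 * k) * |iteratedDeriv (n - k) g (r ^ 2)|
  have hchain : radialDerivTerm n (d + 1) (deriv g) r (k + 1) =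
      radialDerivCoeff n (d + 1) (k + 1) * a := by
    rcases hk.lt_or_eq with hk | rfl
    · simp only [radialDerivTerm, a, ← iteratedDeriv_succ', show n - (k + 1) + 1 = n - k by omega,
        show d + 1 + n - 2 * (k + 1) = d + n - 1 - 2 * k by omega, mul_assoc]
    · simp [radialDerivTerm, radialDerivCoeff]
  have hpair :
      (d : ℝ) * radialDerivTerm n (d - 1) g r k = d * (radialDerivCoeff n (d - 1) k * a) := by
    rcases Nat.eq_zero_or_pos d with rfl | hd
    · simp
    · simp only [radialDerivTerm, a, show d - 1 + n - 2 * k = d + n - 1 - 2 * k by omega, mul_assoc]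
  have hnext : radialDerivTerm (n + 1) d g r (k + 1) = radialDerivCoeff (n + 1) d (k + 1) * a := by
    simp only [radialDerivTerm, a, Nat.add_sub_add_right,
      show d + (n + 1) - 2 * (k + 1) = d + n - 1 - 2 * k by omega, mul_assoc]
  have hcoeff : (2 * radialDerivCoeff n (d + 1) (k + 1) + d * radialDerivCoeff n (d - 1) k : ℝ) ≤
      radialDerivCoeff (n + 1) d (k + 1) := by
    exact_mod_cast radialDerivCoeff_succ_succ_le n d k
  rw [hchain, hpair, hnext]
  nlinarith [mul_le_mul_of_nonneg_right hcoeff (show 0 ≤ a by positivity)]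

theorem two_mul_radialDerivBound_deriv_add_le (n d : ℕ) (g : ℝ → ℝ) {r : ℝ} (hr : 0 ≤ r) :
    2 * radialDerivBound n (d + 1) (deriv g) r + d * radialDerivBound n (d - 1) g r ≤
      radialDerivBound (n + 1) d g r := by
  calc 2 * radialDerivBound n (d + 1) (deriv g) r + d * radialDerivBound n (d - 1) g r
      ≤ 2 * ∑ k ∈ range (n + 2), radialDerivTerm n (d + 1) (deriv g) r k +
          d * radialDerivBound n (d - 1) g r := by
        gcongr
        rw [sum_range_succ _ (n + 1)]
        exact le_add_of_nonneg_right (radialDerivTerm_nonneg _ _ _ hr _)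
    _ = 2 * radialDerivTerm n (d + 1) (deriv g) r 0 + ∑ k ∈ range (n + 1),
          (2 * radialDerivTerm n (d + 1) (deriv g) r (k + 1) +
            d * radialDerivTerm n (d - 1) g r k) := by
        rw [radialDerivBound, sum_range_succ', mul_add, mul_sum, mul_sum, sum_add_distrib]
        ring
    _ ≤ radialDerivTerm (n + 1) d g r 0 +
          ∑ k ∈ range (n + 1), radialDerivTerm (n + 1) d g r (k + 1) := by
        rw [two_mul_radialDerivTerm_deriv_zero]
        gcongr with k hk
        exact two_mul_radialDerivTerm_deriv_succ_add_le (Nat.lt_succ_iff.mp (mem_range.mp hk))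
          d g hr
    _ = radialDerivBound (n + 1) d g r := by
        rw [radialDerivBound, sum_range_succ' _ (n + 1), add_comm]

theorem cast_radialDerivCoeff_zero {n k : ℕ} (hk : 2 * k ≤ n) :
    (radialDerivCoeff n 0 k : ℝ) =
      2 ^ n * (n.factorial / ((n - 2 * k).factorial * k.factorial)) := by
  have hchoose := Nat.choose_mul_factorial_mul_factorial (show k ≤ n by omega)
  have hdesc := Nat.factorial_mul_descFactorial (show k ≤ n - k by omega)
  rw [show n - k - k = n - 2 * k by omega] at hdesc
  rw [radialDerivCoeff, add_zero, ← hchoose, ← hdesc]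
  push_cast
  field_simp

theorem radialDerivCoeff_zero_eq_zero {n k : ℕ} (hk : n < 2 * k) : radialDerivCoeff n 0 k = 0 := by
  simp only [radialDerivCoeff, add_zero, mul_eq_zero, Nat.descFactorial_eq_zero_iff_lt]
  omega

theorem radialDerivBound_zero (n : ℕ) (g : ℝ → ℝ) (r : ℝ) :
    radialDerivBound n 0 g r = 2 ^ n * ∑ k ∈ range (n / 2 + 1),
      (n.factorial : ℝ) / ((n - 2 * k).factorial * k.factorial) * r ^ (n - 2 * k) *
        |iteratedDeriv (n - k) g (r ^ 2)| := by
  rw [radialDerivBound, mul_sum,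
    ← sum_subset (range_subset_range.mpr (by omega : n / 2 + 1 ≤ n + 1))]
  · refine sum_congr rfl fun k hk => ?_
    rw [radialDerivTerm, cast_radialDerivCoeff_zero (by grind), zero_add]
    ring
  · intro k _ hk
    rw [radialDerivTerm, radialDerivCoeff_zero_eq_zero (by grind)]
    simp

section MonomialMulRadial

variable {E : Type*} [NormedAddCommGroup E] [InnerProductSpace ℝ E]

def monomialMulRadial {d : ℕ} (ℓ : Fin d → E →L[ℝ] ℝ) (g : ℝ → ℝ) (x : E) : ℝ :=
  (∏ i, ℓ i x) * g (‖x‖ ^ 2)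

theorem contDiff_monomialMulRadial {d : ℕ} (ℓ : Fin d → E →L[ℝ] ℝ) {g : ℝ → ℝ}
    {n : WithTop ℕ∞} (hg : ContDiff ℝ n g) : ContDiff ℝ n (monomialMulRadial ℓ g) :=
  (contDiff_prod fun i _ => (ℓ i).contDiff).mul (hg.comp (contDiff_norm_sq ℝ))

theorem abs_monomialMulRadial_le {d : ℕ} {ℓ : Fin d → E →L[ℝ] ℝ} (hℓ : ∀ i, ‖ℓ i‖ ≤ 1)
    (g : ℝ → ℝ) (x : E) : |monomialMulRadial ℓ g x| ≤ ‖x‖ ^ d * |g (‖x‖ ^ 2)| := by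
  rw [monomialMulRadial, abs_mul, abs_prod]
  gcongr
  calc ∏ i, |ℓ i x| ≤ ∏ _i : Fin d, ‖x‖ := by
        gcongr with i
        simpa using (ℓ i).le_of_opNorm_le (hℓ i) x
    _ = ‖x‖ ^ d := by simp

theorem fderiv_monomialMulRadial_apply {d : ℕ} (ℓ : Fin d → E →L[ℝ] ℝ) {g : ℝ → ℝ}
    (hg : Differentiable ℝ g) (x v : E) :
    fderiv ℝ (monomialMulRadial ℓ g) x v =
      ∑ i, ℓ i v * ((∏ j ∈ univ.erase i, ℓ j x) * g (‖x‖ ^ 2)) +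
        2 * monomialMulRadial (Fin.cons (innerSL ℝ v) ℓ) (deriv g) x := by
  have hprod := HasFDerivAt.finsetProd (u := univ) fun i _ => (ℓ i).hasFDerivAt (x := x)
  have hrad :=
    (hg (‖x‖ ^ 2)).hasDerivAt.comp_hasFDerivAt x (hasStrictFDerivAt_norm_sq x).hasFDerivAt
  have h : HasFDerivAt (monomialMulRadial ℓ g) _ x := hprod.mul hrad
  rw [h.fderiv]
  simp only [monomialMulRadial, Fin.prod_univ_succ, Fin.cons_zero, Fin.cons_succ,
    innerSL_apply_apply, real_inner_comm v, add_apply, smul_apply, _root_.sum_apply, smul_eq_mul,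
    nsmul_eq_mul, mul_sum]
  rw [add_comm]
  congr 1
  · exact sum_congr rfl fun i _ => by ring
  · push_cast
    ring

theorem iteratedFDeriv_succ_monomialMulRadial_apply (n : ℕ) {d : ℕ} (ℓ : Fin d → E →L[ℝ] ℝ)
    {g : ℝ → ℝ} (hg : ContDiff ℝ (n + 1) g) (x : E) (v : Fin (n + 1) → E) :
    iteratedFDeriv ℝ (n + 1) (monomialMulRadial ℓ g) x v =
      ∑ i, ℓ i (v (Fin.last n)) * iteratedFDeriv ℝ n
          (fun y => (∏ j ∈ univ.erase i, ℓ j y) * g (‖y‖ ^ 2)) x (Fin.init v) +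
        2 * iteratedFDeriv ℝ n
          (monomialMulRadial (Fin.cons (innerSL ℝ (v (Fin.last n))) ℓ) (deriv g)) x
          (Fin.init v) := by
  obtain ⟨hgd, -, hg'⟩ := contDiff_succ_iff_deriv.mp hg
  have hmul : ∀ (c : ℝ) {h : E → ℝ}, ContDiff ℝ n h →
      iteratedFDeriv ℝ n (fun y => c * h y) x = c • iteratedFDeriv ℝ n h x :=
    fun c _ hh => iteratedFDeriv_const_smul_apply' (a := c) hh.contDiffAt
  have hpair : ∀ i, ContDiff ℝ n (fun y => (∏ j ∈ univ.erase i, ℓ j y) * g (‖y‖ ^ 2)) :=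
    fun i => (contDiff_prod fun j _ => (ℓ j).contDiff).mul (hg.of_succ.comp (contDiff_norm_sq ℝ))
  have hchain := contDiff_monomialMulRadial (Fin.cons (innerSL ℝ (v (Fin.last n))) ℓ) hg'
  rw [iteratedFDeriv_succ_apply_eq_iteratedFDeriv_fderiv_apply (contDiff_monomialMulRadial ℓ hg),
    funext fun y => fderiv_monomialMulRadial_apply ℓ hgd y (v (Fin.last n)),
    fun_iteratedFDeriv_add_apply (ContDiff.sum fun i _ => contDiff_const.mul (hpair i)).contDiffAt
      (contDiff_const.mul hchain).contDiffAt,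
    iteratedFDeriv_fun_sum_apply fun i _ => (contDiff_const.mul (hpair i)).contDiffAt,
    sum_congr rfl fun i _ => hmul _ (hpair i), hmul 2 hchain]
  simp only [add_apply, _root_.sum_apply, smul_apply, smul_eq_mul]

theorem abs_iteratedFDeriv_monomialMulRadial_le (n : ℕ) {d : ℕ} {ℓ : Fin d → E →L[ℝ] ℝ}
    (hℓ : ∀ i, ‖ℓ i‖ ≤ 1) {g : ℝ → ℝ} (hg : ContDiff ℝ n g) (x : E) {v : Fin n → E}
    (hv : ∀ i, ‖v i‖ ≤ 1) :
    |iteratedFDeriv ℝ n (monomialMulRadial ℓ g) x v| ≤ radialDerivBound n d g ‖x‖ := by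
  induction n generalizing d g with
  | zero =>
    simpa [radialDerivBound, radialDerivTerm, radialDerivCoeff] using
      abs_monomialMulRadial_le hℓ g x
  | succ n ih =>
    have hg : ContDiff ℝ (n + 1) g := by exact_mod_cast hg
    set u := v (Fin.last n)
    have hu : ‖u‖ ≤ 1 := hv (Fin.last n)
    have hv' : ∀ i, ‖Fin.init v i‖ ≤ 1 := fun i => hv _
    have hpair : ∀ i, |ℓ i u| * |iteratedFDeriv ℝ n
        (fun y => (∏ j ∈ univ.erase i, ℓ j y) * g (‖y‖ ^ 2)) x (Fin.init v)| ≤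
          radialDerivBound n (d - 1) g ‖x‖ := by
      intro i
      rcases d with _ | d
      · exact i.elim0
      · have hℓu : |ℓ i u| ≤ 1 := by
          simpa using ((ℓ i).le_of_opNorm_le (hℓ i) u).trans (by simpa using hu)
        simp_rw [Fin.prod_univ_erase_eq_prod_succAbove]
        exact (mul_le_of_le_one_left (abs_nonneg _) hℓu).trans
          (ih (fun j => hℓ _) hg.of_succ hv')
    have hchain : |iteratedFDeriv ℝ n (monomialMulRadial (Fin.cons (innerSL ℝ u) ℓ) (deriv g)) x
        (Fin.init v)| ≤ radialDerivBound n (d + 1) (deriv g) ‖x‖ := by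
      refine ih (Fin.cases ?_ fun i => ?_) (contDiff_succ_iff_deriv.mp hg).2.2 hv'
      · simpa [innerSL_apply_norm] using hu
      · simpa using hℓ i
    rw [iteratedFDeriv_succ_monomialMulRadial_apply n ℓ hg]
    calc _ ≤ ∑ _i : Fin d, radialDerivBound n (d - 1) g ‖x‖ +
            2 * radialDerivBound n (d + 1) (deriv g) ‖x‖ := by
          refine (abs_add_le _ _).trans (add_le_add ((abs_sum_le_sum_abs _ _).trans ?_) ?_)
          · exact sum_le_sum fun i _ => (abs_mul _ _).trans_le (hpair i)
          · rw [abs_mul, abs_two]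
            gcongr
      _ ≤ radialDerivBound (n + 1) d g ‖x‖ := by
          rw [sum_const, card_univ, Fintype.card_fin, nsmul_eq_mul, add_comm]
          exact two_mul_radialDerivBound_deriv_add_le n d g (norm_nonneg x)

theorem abs_iteratedFDeriv_comp_norm_sq_le {n : ℕ} {f : ℝ → ℝ} (hf : ContDiff ℝ n f) (x : E)
    {v : Fin n → E} (hv : ∀ i, ‖v i‖ ≤ 1) :
    |iteratedFDeriv ℝ n (fun x => f (‖x‖ ^ 2)) x v| ≤
      2 ^ n * ∑ k ∈ range (n / 2 + 1),
        (n.factorial : ℝ) / ((n - 2 * k).factorial * k.factorial) * ‖x‖ ^ (n - 2 * k) *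
          |iteratedDeriv (n - k) f (‖x‖ ^ 2)| := by
  have h := abs_iteratedFDeriv_monomialMulRadial_le n (ℓ := Fin.elim0) (fun i => i.elim0) hf x hv
  rwa [radialDerivBound_zero, show monomialMulRadial (Fin.elim0 : Fin 0 → E →L[ℝ] ℝ) f =
    fun x => f (‖x‖ ^ 2) from funext fun x => by simp [monomialMulRadial]] at h

end MonomialMulRadial

theorem stmt_17 (w : ℕ) (f : ℝ → ℝ) (hf : ContDiff ℝ (w : ℕ∞) f)
    (μ : Fin w → Fin 4) (p : EuclideanSpace ℝ (Fin 4)) :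
    |iteratedFDeriv ℝ w (fun p : EuclideanSpace ℝ (Fin 4) => f (‖p‖ ^ 2)) p
        (fun i => EuclideanSpace.single (μ i) (1 : ℝ))| ≤
      2 ^ w * ∑ k ∈ Finset.range (w / 2 + 1),
        (w.factorial : ℝ) / (((w - 2 * k).factorial : ℝ) * (k.factorial : ℝ)) *
          ‖p‖ ^ (w - 2 * k) * |iteratedDeriv (w - k) f (‖p‖ ^ 2)| :=
  abs_iteratedFDeriv_comp_norm_sq_le (by exact_mod_cast hf) p fun i => by simp
end
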